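/- arXiv:math/9409204 — 10 statements merged into one kernel-verified Lean document; each statement's English description precedes it below -/
import Mathlib

section
/- If Γ = ⟨L, R, E⟩ is a homogeneous bipartite graph (every finite partial automorphism preserving sides extends to a total automorphism) with |L| ≥ 2, and there exist two distinct vertices x, y ∈ L with the same set of neighbors, then Γ is either complete or empty. -/
structure BipGraph (V : Type*) where
  L : Set V
  R : Set V
  Lne : L.Nonempty
  Rne : R.Nonempty
  disj : Disjoint L R
  E : V → V → Prop
  symm : ∀ x y, E x y → E y x
  bip : ∀ x y, E x y → (x ∈ L ∧ y ∈ R) ∨ (x ∈ R ∧ y ∈ L)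

namespace BipGraph

variable {V W : Type*}

def verts (Γ : BipGraph V) : Set V := Γ.L ∪ Γ.R

def nbr (Γ : BipGraph V) (v : V) : Set V := {u | Γ.E v u}

def IsComplete (Γ : BipGraph V) : Prop := ∀ x ∈ Γ.L, ∀ y ∈ Γ.R, Γ.E x y

def IsEmptyG (Γ : BipGraph V) : Prop := ∀ x y, ¬ Γ.E x y

def IsPartialIso (Γ : BipGraph V) (Γ' : BipGraph W) (s : Set V) (f : V → W) : Prop :=
  s ⊆ Γ.verts ∧ Set.InjOn f s ∧
  (∀ x ∈ s, x ∈ Γ.L → f x ∈ Γ'.L) ∧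
  (∀ x ∈ s, x ∈ Γ.R → f x ∈ Γ'.R) ∧
  (∀ x ∈ s, ∀ y ∈ s, (Γ.E x y ↔ Γ'.E (f x) (f y)))

def IsIso (Γ : BipGraph V) (Γ' : BipGraph W) (f : V → W) : Prop :=
  Set.BijOn f Γ.verts Γ'.verts ∧
  Set.MapsTo f Γ.L Γ'.L ∧ Set.MapsTo f Γ.R Γ'.R ∧
  (∀ x ∈ Γ.verts, ∀ y ∈ Γ.verts, (Γ.E x y ↔ Γ'.E (f x) (f y)))

def IsAuto (Γ : BipGraph V) (f : V → V) : Prop := Γ.IsIso Γ f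

def Homog (Γ : BipGraph V) : Prop :=
  ∀ (s : Set V) (f : V → V), s.Finite → Γ.IsPartialIso Γ s f →
    ∃ g : V → V, Γ.IsAuto g ∧ Set.EqOn f g s

def IsRandom (Γ : BipGraph V) : Prop :=
  Γ.L.Infinite ∧ Γ.R.Infinite ∧
  (∀ X Y : Set V, X ⊆ Γ.L → Y ⊆ Γ.L → X.Finite → Y.Finite → Disjoint X Y →
    {u ∈ Γ.R | (∀ x ∈ X, Γ.E x u) ∧ (∀ y ∈ Y, ¬ Γ.E y u)}.Infinite) ∧
  (∀ X Y : Set V, X ⊆ Γ.R → Y ⊆ Γ.R → X.Finite → Y.Finite → Disjoint X Y →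
    {u ∈ Γ.L | (∀ x ∈ X, Γ.E x u) ∧ (∀ y ∈ Y, ¬ Γ.E y u)}.Infinite)

def Ctble (Γ : BipGraph V) : Prop := Γ.L.Countable ∧ Γ.R.Countable

def IsSaS (Γ : BipGraph V) (κ μ : Cardinal) : Prop :=
  Γ.Homog ∧ ¬ Γ.IsComplete ∧ ¬ Γ.IsEmptyG ∧
  Cardinal.mk Γ.L = κ ∧ Cardinal.mk Γ.R = μ ∧ κ < μ

end BipGraph


theorem homog_same_nbr_complete_or_empty {V : Type*} (Γ : BipGraph V)
    (hhom : Γ.Homog) (x y : V) (hx : x ∈ Γ.L) (hy : y ∈ Γ.L) (hxy : x ≠ y)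
    (hnbr : Γ.nbr x = Γ.nbr y) :
    Γ.IsComplete ∨ Γ.IsEmptyG := by
  classical
  have noLL : ∀ a ∈ Γ.L, ∀ b ∈ Γ.L, ¬ Γ.E a b := by
    intro a ha b hb h
    rcases Γ.bip a b h with ⟨_, hbR⟩ | ⟨haR, _⟩
    · exact (Set.disjoint_left.mp Γ.disj hb) hbR
    · exact (Set.disjoint_left.mp Γ.disj ha) haR
  have noRR : ∀ a ∈ Γ.R, ∀ b ∈ Γ.R, ¬ Γ.E a b := by
    intro a ha b hb h
    rcases Γ.bip a b h with ⟨haL, _⟩ | ⟨_, hbL⟩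
    · exact (Set.disjoint_left.mp Γ.disj haL) ha
    · exact (Set.disjoint_left.mp Γ.disj hbL) hb
  -- all left vertices have the same neighbors
  have key : ∀ u ∈ Γ.L, ∀ v ∈ Γ.L, ∀ r, Γ.E u r → Γ.E v r := by
    intro u hu v hv r hur
    by_cases huv : u = v
    · subst huv; exact hur
    · set f : V → V := fun z => if z = x then u else v with hf
      have hfx : f x = u := by simp [hf]
      have hfy : f y = v := by simp [hf, if_neg (Ne.symm hxy)]
      have hpi : Γ.IsPartialIso Γ {x, y} f := by
        refine ⟨?_, ?_, ?_, ?_, ?_⟩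
        · intro z hz
          rcases hz with rfl | rfl
          · exact Or.inl hx
          · exact Or.inl hy
        · intro a ha b hb hab
          rw [Set.mem_insert_iff, Set.mem_singleton_iff] at ha hb
          rcases ha with ha | ha <;> rcases hb with hb | hb <;>
            rw [ha, hb] at hab ⊢ <;>
            simp only [hf, if_pos rfl, if_neg (Ne.symm hxy)] at hab <;>
            first
              | rfl
              | exact absurd hab huv
              | exact absurd hab.symm huv
        · intro z hz _
          rcases hz with rfl | hz
          · rw [hfx]; exact hu
          · rw [Set.mem_singleton_iff] at hz; subst hz; rw [hfy]; exact hv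
        · intro z hz hzR
          rcases hz with rfl | hz
          · exact absurd hzR (Set.disjoint_left.mp Γ.disj hx)
          · rw [Set.mem_singleton_iff] at hz; subst hz
            exact absurd hzR (Set.disjoint_left.mp Γ.disj hy)
        · intro a ha b hb
          have haL : a ∈ Γ.L := by rcases ha with rfl | ha; exact hx;
                                    rw [Set.mem_singleton_iff] at ha; subst ha; exact hy
          have hbL : b ∈ Γ.L := by rcases hb with rfl | hb; exact hx;
                                    rw [Set.mem_singleton_iff] at hb; subst hb; exact hy
          have hfaL : f a ∈ Γ.L := by
            rcases ha with rfl | ha; · rw [hfx]; exact hu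
            rw [Set.mem_singleton_iff] at ha; subst ha; rw [hfy]; exact hv
          have hfbL : f b ∈ Γ.L := by
            rcases hb with rfl | hb; · rw [hfx]; exact hu
            rw [Set.mem_singleton_iff] at hb; subst hb; rw [hfy]; exact hv
          exact iff_of_false (noLL a haL b hbL) (noLL _ hfaL _ hfbL)
      obtain ⟨g, hg, heq⟩ := hhom {x, y} f
        ((Set.finite_singleton y).insert x) hpi
      have hgx : g x = u := by rw [← heq (Set.mem_insert _ _), hfx]
      have hgy : g y = v := by
        rw [← heq (Set.mem_insert_of_mem _ rfl), hfy]
      have hrR : r ∈ Γ.R := by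
        rcases Γ.bip u r hur with ⟨_, h⟩ | ⟨huR, _⟩
        · exact h
        · exact absurd huR (Set.disjoint_left.mp Γ.disj hu)
      obtain ⟨r0, hr0, hgr0⟩ := hg.1.2.2 (Or.inr hrR : r ∈ Γ.verts)
      have h1 : Γ.E x r0 ↔ Γ.E u r := by
        rw [← hgx, ← hgr0]; exact hg.2.2.2 x (Or.inl hx) r0 hr0
      have h2 : Γ.E y r0 ↔ Γ.E v r := by
        rw [← hgy, ← hgr0]; exact hg.2.2.2 y (Or.inl hy) r0 hr0
      have hxr0 : Γ.E x r0 := h1.mpr hur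
      have hyr0 : Γ.E y r0 := by
        have : r0 ∈ Γ.nbr x := hxr0
        rw [hnbr] at this; exact this
      exact h2.mp hyr0
  by_cases hE : ∃ a b, Γ.E a b
  · left
    obtain ⟨c0, d0, hcd0⟩ := hE
    have hedge : ∃ c ∈ Γ.L, ∃ d ∈ Γ.R, Γ.E c d := by
      rcases Γ.bip c0 d0 hcd0 with ⟨hcL, hdR⟩ | ⟨hcR, hdL⟩
      · exact ⟨c0, hcL, d0, hdR, hcd0⟩
      · exact ⟨d0, hdL, c0, hcR, Γ.symm _ _ hcd0⟩
    obtain ⟨c, hcL, d, hdR, hcd⟩ := hedge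
    intro a ha b hb
    have had : Γ.E a d := key c hcL a ha d hcd
    -- partial iso sending d to b
    set f : V → V := fun _ => b with hf
    have hpi : Γ.IsPartialIso Γ {d} f := by
      refine ⟨?_, ?_, ?_, ?_, ?_⟩
      · intro z hz; rw [Set.mem_singleton_iff] at hz; subst hz; exact Or.inr hdR
      · intro p hp q hq _
        rw [Set.mem_singleton_iff] at hp hq; rw [hp, hq]
      · intro z hz hzL
        rw [Set.mem_singleton_iff] at hz; subst hz
        exact absurd hdR (Set.disjoint_left.mp Γ.disj hzL)
      · intro z hz _; exact hb
      · intro p hp q hq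
        rw [Set.mem_singleton_iff] at hp hq; rw [hp, hq]
        exact iff_of_false (noRR d hdR d hdR) (noRR b hb b hb)
    obtain ⟨g, hg, heq⟩ := hhom {d} f (Set.finite_singleton d) hpi
    have hgd : g d = b := by rw [← heq rfl]
    have hgaL : g a ∈ Γ.L := hg.2.1 ha
    have : Γ.E (g a) b := by
      rw [← hgd]
      exact (hg.2.2.2 a (Or.inl ha) d (Or.inr hdR)).mp had
    exact key (g a) hgaL a ha b this
  · right
    intro a b h
    exact hE ⟨a, b, h⟩
end

section
/- Every homogeneous bipartite graph which is neither complete nor empty is extensional: for all vertices x, y on the same side, Γ(x) = Γ(y) implies x = y. -/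
namespace BipGraph

variable {V : Type*}

lemma not_edge_left (Γ : BipGraph V) {x y : V} (hx : x ∈ Γ.L) (hy : y ∈ Γ.L) :
    ¬ Γ.E x y := by
  intro h
  rcases Γ.bip x y h with ⟨_, h2⟩ | ⟨h1, _⟩
  · exact Set.disjoint_left.mp Γ.disj hy h2
  · exact Set.disjoint_left.mp Γ.disj hx h1

lemma not_edge_right (Γ : BipGraph V) {x y : V} (hx : x ∈ Γ.R) (hy : y ∈ Γ.R) :
    ¬ Γ.E x y := by
  intro h
  rcases Γ.bip x y h with ⟨h1, _⟩ | ⟨_, h2⟩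
  · exact Set.disjoint_left.mp Γ.disj h1 hx
  · exact Set.disjoint_left.mp Γ.disj h2 hy

def flip (Γ : BipGraph V) : BipGraph V where
  L := Γ.R
  R := Γ.L
  Lne := Γ.Rne
  Rne := Γ.Lne
  disj := Γ.disj.symm
  E := Γ.E
  symm := Γ.symm
  bip := fun x y h => (Γ.bip x y h).symm

lemma flip_verts (Γ : BipGraph V) : (flip Γ).verts = Γ.verts := by
  simp [verts, flip, Set.union_comm]

lemma flip_homog (Γ : BipGraph V) (h : Γ.Homog) : (flip Γ).Homog := by
  intro s f hs ⟨h1, h2, h3, h4, h5⟩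
  rw [flip_verts] at h1
  obtain ⟨g, ⟨hg1, hg2, hg3, hg4⟩, hEq⟩ := h s f hs ⟨h1, h2, h4, h3, h5⟩
  refine ⟨g, ⟨?_, hg3, hg2, ?_⟩, hEq⟩
  · rwa [flip_verts]
  · intro x hx y hy
    rw [flip_verts] at hx hy
    exact hg4 x hx y hy

lemma flip_not_complete (Γ : BipGraph V) (h : ¬ Γ.IsComplete) : ¬ (flip Γ).IsComplete := by
  intro h'
  exact h fun x hx y hy => Γ.symm _ _ (h' y hy x hx)

lemma flip_not_empty (Γ : BipGraph V) (h : ¬ Γ.IsEmptyG) : ¬ (flip Γ).IsEmptyG := h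

lemma flip_nbr (Γ : BipGraph V) (v : V) : (flip Γ).nbr v = Γ.nbr v := rfl

/-- Key step: there exist `a c ∈ L`, `b ∈ R` with `E a b` and `¬ E c b`. -/
lemma exists_distinguishing (Γ : BipGraph V)
    (hhom : Γ.Homog) (hc : ¬ Γ.IsComplete) (he : ¬ Γ.IsEmptyG) :
    ∃ a ∈ Γ.L, ∃ c ∈ Γ.L, ∃ b ∈ Γ.R, Γ.E a b ∧ ¬ Γ.E c b := by
  classical
  -- get an edge with the right orientation
  rw [IsEmptyG] at he
  push_neg at he
  obtain ⟨u, v, huv⟩ := he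
  obtain ⟨a0, b0, ha0, hb0, hab0⟩ : ∃ a0 b0, a0 ∈ Γ.L ∧ b0 ∈ Γ.R ∧ Γ.E a0 b0 := by
    rcases Γ.bip u v huv with ⟨h1, h2⟩ | ⟨h1, h2⟩
    · exact ⟨u, v, h1, h2, huv⟩
    · exact ⟨v, u, h2, h1, Γ.symm _ _ huv⟩
  -- get a non-edge
  rw [IsComplete] at hc
  push_neg at hc
  obtain ⟨c0, hc0, d0, hd0, hcd0⟩ := hc
  by_contra hP
  push_neg at hP
  -- every b ∈ R is adjacent to all of L or none of it
  have hall : ∀ a ∈ Γ.L, Γ.E a b0 := fun a ha => hP a0 ha0 a ha b0 hb0 hab0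
  have hnone : ∀ a ∈ Γ.L, ¬ Γ.E a d0 := by
    intro a ha had
    exact hcd0 (hP a ha c0 hc0 d0 hd0 had)
  have hbd : b0 ≠ d0 := by
    intro hEq
    exact hnone a0 ha0 (hEq ▸ hab0)
  -- swap b0 and d0
  set f : V → V := fun w => if w = b0 then d0 else b0 with hf
  have hfb : f b0 = d0 := by simp [hf]
  have hfd : f d0 = b0 := by simp [hf, hbd.symm]
  have hmem : ∀ w ∈ ({b0, d0} : Set V), w ∈ Γ.R ∧ f w ∈ Γ.R := by
    rintro w (rfl | rfl)
    · exact ⟨hb0, hfb ▸ hd0⟩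
    · exact ⟨hd0, hfd ▸ hb0⟩
  have hpi : Γ.IsPartialIso Γ ({b0, d0} : Set V) f := by
    refine ⟨?_, ?_, ?_, ?_, ?_⟩
    · rintro w (rfl | rfl)
      · exact Or.inr hb0
      · exact Or.inr hd0
    · rintro w (rfl | rfl) w' (rfl | rfl) hww' <;> simp_all [hf]
    · intro w hw hwL
      exact absurd hwL (Set.disjoint_right.mp Γ.disj (hmem w hw).1)
    · intro w hw _
      exact (hmem w hw).2
    · intro w hw w' hw'
      constructor
      · intro hE; exact absurd hE (Γ.not_edge_right (hmem w hw).1 (hmem w' hw').1)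
      · intro hE; exact absurd hE (Γ.not_edge_right (hmem w hw).2 (hmem w' hw').2)
  obtain ⟨g, ⟨hg1, hg2, hg3, hg4⟩, hEq⟩ :=
    hhom _ f ((Set.finite_singleton b0).insert d0 |>.subset (by simp [Set.pair_comm])) hpi
  have hgb : g b0 = d0 := by
    rw [← hEq (by simp : b0 ∈ ({b0, d0} : Set V)), hfb]
  have : Γ.E (g a0) (g b0) :=
    (hg4 a0 (Or.inl ha0) b0 (Or.inr hb0)).mp hab0
  rw [hgb] at this
  exact hnone (g a0) (hg2 ha0) this

lemma left_ext (Γ : BipGraph V)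
    (hhom : Γ.Homog) (hc : ¬ Γ.IsComplete) (he : ¬ Γ.IsEmptyG) :
    ∀ x ∈ Γ.L, ∀ y ∈ Γ.L, Γ.nbr x = Γ.nbr y → x = y := by
  obtain ⟨a, ha, c, hcL, b, hb, hab, hcb⟩ := Γ.exists_distinguishing hhom hc he
  have hac : a ≠ c := fun hEq => hcb (hEq ▸ hab)
  intro x hx y hy hnbr
  by_contra hxy
  classical
  set f : V → V := fun w => if w = x then a else c with hf
  have hfx : f x = a := by simp [hf]
  have hfy : f y = c := if_neg fun h => hxy h.symm
  have hmem : ∀ w ∈ ({x, y} : Set V), w ∈ Γ.L ∧ f w ∈ Γ.L := by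
    rintro w (rfl | rfl)
    · exact ⟨hx, hfx ▸ ha⟩
    · exact ⟨hy, hfy ▸ hcL⟩
  have hpi : Γ.IsPartialIso Γ ({x, y} : Set V) f := by
    refine ⟨?_, ?_, ?_, ?_, ?_⟩
    · rintro w (rfl | rfl)
      · exact Or.inl hx
      · exact Or.inl hy
    · rintro w (rfl | rfl) w' (rfl | rfl) hww' <;> simp_all [hf]
    · intro w hw _
      exact (hmem w hw).2
    · intro w hw hwR
      exact absurd hwR (Set.disjoint_left.mp Γ.disj (hmem w hw).1)
    · intro w hw w' hw'
      constructor
      · intro hE; exact absurd hE (Γ.not_edge_left (hmem w hw).1 (hmem w' hw').1)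
      · intro hE; exact absurd hE (Γ.not_edge_left (hmem w hw).2 (hmem w' hw').2)
  obtain ⟨g, ⟨hg1, hg2, hg3, hg4⟩, hEq⟩ :=
    hhom _ f ((Set.finite_singleton x).insert y |>.subset (by simp [Set.pair_comm])) hpi
  have hgx : g x = a := by rw [← hEq (by simp : x ∈ ({x, y} : Set V)), hfx]
  have hgy : g y = c := by rw [← hEq (by simp : y ∈ ({x, y} : Set V)), hfy]
  obtain ⟨v, hv, hgv⟩ := hg1.2.2 (Or.inr hb : b ∈ Γ.verts)
  have h1 : Γ.E x v ↔ Γ.E a b := by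
    rw [← hgx, ← hgv]; exact hg4 x (Or.inl hx) v hv
  have h2 : Γ.E y v ↔ Γ.E c b := by
    rw [← hgy, ← hgv]; exact hg4 y (Or.inl hy) v hv
  have hxyv : Γ.E x v ↔ Γ.E y v := by
    constructor <;> intro hE
    · have : v ∈ Γ.nbr x := hE
      rw [hnbr] at this; exact this
    · have : v ∈ Γ.nbr y := hE
      rw [← hnbr] at this; exact this
  exact hcb (h2.mp (hxyv.mp (h1.mpr hab)))

end BipGraph

theorem homog_nontrivial_extensional {V : Type*} (Γ : BipGraph V)
    (hhom : Γ.Homog) (hc : ¬ Γ.IsComplete) (he : ¬ Γ.IsEmptyG) :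
    (∀ x ∈ Γ.L, ∀ y ∈ Γ.L, Γ.nbr x = Γ.nbr y → x = y) ∧
    (∀ x ∈ Γ.R, ∀ y ∈ Γ.R, Γ.nbr x = Γ.nbr y → x = y) := by
  constructor
  · exact Γ.left_ext hhom hc he
  · exact (Γ.flip).left_ext (Γ.flip_homog hhom) (Γ.flip_not_complete hc) (Γ.flip_not_empty he)
end

section
/- If Γ = ⟨L, R, E⟩ is a homogeneous bipartite graph with L and R infinite, in which every left vertex has a neighbor set that is infinite and co-infinite in R and every right vertex has a neighbor set that is infinite and co-infinite in L, then for all k, l < ω and all distinct x₀,…,x_k, y₀,…,y_l ∈ L there exist infinitely many u ∈ R such that u is adjacent to every x_i and not adjacent to any y_j. -/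
section Aux

variable {V : Type*}

lemma BipGraph.not_E_of_left_left (Γ : BipGraph V) {x y : V}
    (hx : x ∈ Γ.L) (hy : y ∈ Γ.L) : ¬ Γ.E x y := by
  intro h
  rcases Γ.bip x y h with ⟨_, h2⟩ | ⟨h1, _⟩
  · exact (Set.disjoint_left.mp Γ.disj hy) h2
  · exact (Set.disjoint_left.mp Γ.disj hx) h1

lemma BipGraph.nbr_subset_L (Γ : BipGraph V) {u : V} (hu : u ∈ Γ.R) :
    Γ.nbr u ⊆ Γ.L := by
  intro w hw
  rcases Γ.bip u w hw with ⟨h1, _⟩ | ⟨_, h2⟩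
  · exact absurd h1 (Set.disjoint_right.mp Γ.disj hu)
  · exact h2

lemma BipGraph.exists_witness (Γ : BipGraph V) (hhom : Γ.Homog)
    (hRne : Γ.R.Nonempty)
    (hright : ∀ u ∈ Γ.R, (Γ.nbr u).Infinite ∧ (Γ.L \ Γ.nbr u).Infinite)
    (X Y : Finset V) (hX : ↑X ⊆ Γ.L) (hY : ↑Y ⊆ Γ.L)
    (hdisj : Disjoint X Y) :
    ∃ v ∈ Γ.R, (∀ x ∈ X, Γ.E x v) ∧ (∀ y ∈ Y, ¬ Γ.E y v) := by
  classical
  obtain ⟨u, hu⟩ := hRne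
  obtain ⟨hn, hc⟩ := hright u hu
  obtain ⟨X', hX'sub, hX'card⟩ := hn.exists_subset_card_eq X.card
  obtain ⟨Y', hY'sub, hY'card⟩ := hc.exists_subset_card_eq Y.card
  have e1 : (X : Finset V) ≃ X' := Finset.equivOfCardEq hX'card.symm
  have e2 : (Y : Finset V) ≃ Y' := Finset.equivOfCardEq hY'card.symm
  set f : V → V := fun v =>
    if h : v ∈ X then (e1 ⟨v, h⟩ : V)
    else if h : v ∈ Y then (e2 ⟨v, h⟩ : V) else v with hf
  have hfX : ∀ x (hx : x ∈ X), f x ∈ X' ∧ f x = (e1 ⟨x, hx⟩ : V) := by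
    intro x hx
    simp only [hf, dif_pos hx]
    exact ⟨(e1 ⟨x, hx⟩).2, trivial⟩
  have hfY : ∀ y ∈ Y, f y ∈ Y' := by
    intro y hy
    have hyX : y ∉ X := Finset.disjoint_right.mp hdisj hy
    simp only [hf, dif_neg hyX, dif_pos hy]
    exact (e2 ⟨y, hy⟩).2
  have hX'L : (X' : Set V) ⊆ Γ.L := hX'sub.trans (Γ.nbr_subset_L hu)
  have hY'L : (Y' : Set V) ⊆ Γ.L := fun w hw => (hY'sub hw).1
  have hY'n : ∀ w ∈ Y', w ∉ Γ.nbr u := fun w hw => (hY'sub hw).2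
  have hfL : ∀ v ∈ X ∪ Y, f v ∈ Γ.L := by
    intro v hv
    rcases Finset.mem_union.mp hv with h | h
    · exact hX'L (hfX v h).1
    · exact hY'L (hfY v h)
  have hinj : Set.InjOn f ↑(X ∪ Y) := by
    intro a ha b hb hab
    rcases Finset.mem_union.mp ha with ha' | ha' <;>
      rcases Finset.mem_union.mp hb with hb' | hb'
    · have := (hfX a ha').2.symm.trans (hab.trans (hfX b hb').2)
      have : (⟨a, ha'⟩ : (X : Finset V)) = ⟨b, hb'⟩ := e1.injective (Subtype.ext this)
      exact congrArg Subtype.val this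
    · exact absurd ((hfX a ha').2 ▸ hab ▸ hfY b hb')
        (by intro h; exact hY'n _ h (hX'sub ((hfX a ha').2 ▸ (hfX a ha').1)))
    · exact absurd ((hfX b hb').2 ▸ hab ▸ hfY a ha')
        (by intro h; exact hY'n _ h (hX'sub ((hfX b hb').2 ▸ (hfX b hb').1)))
    · have h1 : f a = (e2 ⟨a, ha'⟩ : V) := by
        have haX : a ∉ X := Finset.disjoint_right.mp hdisj ha'
        simp only [hf, dif_neg haX, dif_pos ha']
      have h2 : f b = (e2 ⟨b, hb'⟩ : V) := by
        have hbX : b ∉ X := Finset.disjoint_right.mp hdisj hb'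
        simp only [hf, dif_neg hbX, dif_pos hb']
      have := h1.symm.trans (hab.trans h2)
      have : (⟨a, ha'⟩ : (Y : Finset V)) = ⟨b, hb'⟩ := e2.injective (Subtype.ext this)
      exact congrArg Subtype.val this
  have hsL : (↑(X ∪ Y) : Set V) ⊆ Γ.L := by
    intro v hv
    rcases Finset.mem_union.mp hv with h | h
    · exact hX (by exact_mod_cast h)
    · exact hY (by exact_mod_cast h)
  have hpi : Γ.IsPartialIso Γ ↑(X ∪ Y) f := by
    refine ⟨hsL.trans Set.subset_union_left, hinj, ?_, ?_, ?_⟩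
    · intro x hx _; exact hfL x (by exact_mod_cast hx)
    · intro x hx hxR
      exact absurd hxR (Set.disjoint_left.mp Γ.disj (hsL hx))
    · intro x hx y hy
      constructor
      · intro h; exact absurd h (Γ.not_E_of_left_left (hsL hx) (hsL hy))
      · intro h
        exact absurd h (Γ.not_E_of_left_left (hfL x (by exact_mod_cast hx))
          (hfL y (by exact_mod_cast hy)))
  obtain ⟨g, hg, heq⟩ := hhom ↑(X ∪ Y) f (X ∪ Y).finite_toSet hpi
  obtain ⟨v, hv, hgv⟩ := hg.1.surjOn (show u ∈ Γ.verts from Or.inr hu)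
  have hvR : v ∈ Γ.R := by
    rcases hv with h | h
    · exact absurd (hgv ▸ hg.2.1 h) (Set.disjoint_right.mp Γ.disj hu)
    · exact h
  refine ⟨v, hvR, ?_, ?_⟩
  · intro x hx
    have hxs : x ∈ (↑(X ∪ Y) : Set V) := by
      exact_mod_cast Finset.mem_union_left Y hx
    have hiff := hg.2.2.2 x (Or.inl (hsL hxs)) v hv
    rw [hiff, ← heq hxs, hgv]
    have : f x ∈ Γ.nbr u := hX'sub ((hfX x hx).1)
    exact Γ.symm u (f x) this
  · intro y hy hEy
    have hys : y ∈ (↑(X ∪ Y) : Set V) := by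
      exact_mod_cast Finset.mem_union_right X hy
    have hiff := hg.2.2.2 y (Or.inl (hsL hys)) v hv
    rw [hiff, ← heq hys, hgv] at hEy
    exact hY'n (f y) (hfY y hy) (Γ.symm (f y) u hEy)

end Aux

theorem homog_infinite_coinfinite_random {V : Type*} (Γ : BipGraph V)
    (hhom : Γ.Homog) (hL : Γ.L.Infinite) (hR : Γ.R.Infinite)
    (hleft : ∀ x ∈ Γ.L, (Γ.nbr x).Infinite ∧ (Γ.R \ Γ.nbr x).Infinite)
    (hright : ∀ u ∈ Γ.R, (Γ.nbr u).Infinite ∧ (Γ.L \ Γ.nbr u).Infinite) :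
    ∀ X Y : Finset V, ↑X ⊆ Γ.L → ↑Y ⊆ Γ.L → X.Nonempty → Y.Nonempty →
      Disjoint X Y →
      {u ∈ Γ.R | (∀ x ∈ X, Γ.E x u) ∧ (∀ y ∈ Y, ¬ Γ.E y u)}.Infinite := by
  classical
  intro X Y hX hY _ _ hdisj
  by_contra hfin
  rw [Set.not_infinite] at hfin
  set S := {u ∈ Γ.R | (∀ x ∈ X, Γ.E x u) ∧ (∀ y ∈ Y, ¬ Γ.E y u)} with hS
  set T : Finset V := hfin.toFinset with hT
  have hmem : ∀ t, t ∈ T ↔ t ∈ S := fun t => hfin.mem_toFinset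
  have hch : ∀ t ∈ T, ∃ w, w ∈ Γ.nbr t ∧ w ∉ X := by
    intro t ht
    have htR : t ∈ Γ.R := ((hmem t).mp ht).1
    have : (Γ.nbr t \ ↑X).Infinite := ((hright t htR).1).diff X.finite_toSet
    obtain ⟨w, hw⟩ := this.nonempty
    exact ⟨w, hw.1, hw.2⟩
  choose! z hz1 hz2 using hch
  set Z : Finset V := T.image z with hZ
  have hZL : (Z : Set V) ⊆ Γ.L := by
    intro w hw
    obtain ⟨t, ht, rfl⟩ := Finset.mem_image.mp (by exact_mod_cast hw)
    exact Γ.nbr_subset_L ((hmem t).mp ht).1 (hz1 t ht)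
  have hYZ : (↑(Y ∪ Z) : Set V) ⊆ Γ.L := by
    intro w hw
    rcases Finset.mem_union.mp (by exact_mod_cast hw) with h | h
    · exact hY (by exact_mod_cast h)
    · exact hZL (by exact_mod_cast h)
  have hdisj' : Disjoint X (Y ∪ Z) := by
    rw [Finset.disjoint_union_right]
    refine ⟨hdisj, ?_⟩
    rw [Finset.disjoint_right]
    intro w hw
    obtain ⟨t, ht, rfl⟩ := Finset.mem_image.mp hw
    exact hz2 t ht
  obtain ⟨v, hvR, hvX, hvYZ⟩ := Γ.exists_witness hhom hR.nonempty hright X (Y ∪ Z)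
    hX hYZ hdisj'
  have hvS : v ∈ S := ⟨hvR, hvX, fun y hy => hvYZ y (Finset.mem_union_left Z hy)⟩
  have hvT : v ∈ T := (hmem v).mpr hvS
  have : ¬ Γ.E (z v) v := hvYZ (z v) (Finset.mem_union_right Y (Finset.mem_image_of_mem z hvT))
  exact this (Γ.symm v (z v) (hz1 v hvT))
end

section
/- Every finite bipartite graph Γ has a finite bipartite magic extension Γ': Γ is an induced subgraph of Γ' (with left side contained in left side and right side in right side) and every partial automorphism of Γ respecting sides extends to a total automorphism of Γ' respecting sides. -/
open Classical in
/-- Extend an injection on a set in a fintype to a permutation. -/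
lemma exists_perm_extend {α : Type*} [Fintype α] (s : Set α) (f : α → α)
    (hinj : Set.InjOn f s) : ∃ π : Equiv.Perm α, ∀ x ∈ s, π x = f x := by
  classical
  refine ⟨(Equiv.Set.imageOfInjOn f s hinj).extendSubtype, fun x hx => ?_⟩
  rw [Equiv.extendSubtype_apply_of_mem _ x hx]
  rfl

/-- Extend an injection `s → t` (with `s ⊆ t`) to a permutation preserving `t`
and fixing the complement of `t` pointwise. -/
lemma exists_perm_extend_mapsTo {α : Type*} [Fintype α] (t s : Set α) (f : α → α)
    (hst : s ⊆ t) (hinj : Set.InjOn f s) (hmap : Set.MapsTo f s t) :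
    ∃ π : Equiv.Perm α, (∀ x ∈ s, π x = f x) ∧ (∀ x ∈ t, π x ∈ t) ∧
      (∀ x ∉ t, π x = x) := by
  classical
  set p : α → Prop := fun x => x ∈ t with hp
  have hf' : ∀ x : Subtype p, ((x : α) ∈ s) → p (f x) := fun x hx => hmap hx
  set f' : Subtype p → Subtype p := fun x =>
    if h : (x : α) ∈ s then ⟨f x, hf' x h⟩ else x with hf'def
  have hinj' : Set.InjOn f' {x : Subtype p | (x : α) ∈ s} := by
    intro x hx y hy hxy
    have hx' : (x : α) ∈ s := hx
    have hy' : (y : α) ∈ s := hy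
    simp only [hf'def, dif_pos hx', dif_pos hy', Subtype.mk.injEq] at hxy
    exact Subtype.ext (hinj hx' hy' hxy)
  obtain ⟨π', hπ'⟩ := exists_perm_extend _ f' hinj'
  refine ⟨Equiv.Perm.ofSubtype π', fun x hx => ?_, fun x hx => ?_, fun x hx => ?_⟩
  · rw [Equiv.Perm.ofSubtype_apply_of_mem π' (hst hx), hπ' ⟨x, hst hx⟩ hx,
      hf'def]
    simp [hx]
  · rw [Equiv.Perm.ofSubtype_apply_of_mem π' hx]
    exact (π' ⟨x, hx⟩).2
  · exact Equiv.Perm.ofSubtype_apply_of_not_mem π' hx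

private lemma magic_logic1 {a b cc : Prop} : ((a ↔ ¬b) ↔ ((a ↔ ¬cc) ↔ ¬(b ↔ ¬cc))) := by
  tauto

private lemma magic_logic2 {A B C : Prop} (h : A ↔ (B ↔ ¬C)) : ((B ↔ ¬A) ↔ C) := by
  tauto

private lemma magic_logic3 {A B C : Prop} (hA : ¬A) (hB : ¬B) (hC : ¬C) :
    ((B ↔ ¬A) ↔ C) := by
  tauto

theorem finite_bipartite_magic_extension {V : Type*} (Γ : BipGraph V)
    (hfin : Γ.verts.Finite) :
    ∃ (W : Type) (Γ' : BipGraph W) (ι : V → W),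
      Γ'.verts.Finite ∧
      Set.InjOn ι Γ.verts ∧
      (ι '' Γ.L ⊆ Γ'.L) ∧ (ι '' Γ.R ⊆ Γ'.R) ∧
      (∀ x ∈ Γ.verts, ∀ y ∈ Γ.verts, (Γ.E x y ↔ Γ'.E (ι x) (ι y))) ∧
      (∀ (s : Set V) (f : V → V), Γ.IsPartialIso Γ s f →
        ∃ g : W → W, Γ'.IsAuto g ∧ ∀ x ∈ s, g (ι x) = ι (f x)) := by
  classical
  haveI : Fintype ↥Γ.verts := hfin.fintype
  obtain ⟨v₀, hv₀⟩ := Γ.Lne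
  obtain ⟨r₀, hr₀⟩ := Γ.Rne
  have hv₀v : v₀ ∈ Γ.verts := Or.inl hv₀
  have hr₀v : r₀ ∈ Γ.verts := Or.inr hr₀
  have hLR : ∀ v, v ∈ Γ.L → v ∈ Γ.R → False :=
    fun v h h' => Set.disjoint_left.1 Γ.disj h h'
  have hLL : ∀ a b, a ∈ Γ.L → b ∈ Γ.L → ¬ Γ.E a b := by
    intro a b ha hb hE
    rcases Γ.bip a b hE with ⟨_, h2⟩ | ⟨h1, _⟩
    · exact hLR b hb h2
    · exact hLR a ha h1
  set n := Fintype.card ↥Γ.verts with hn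
  set e : ↥Γ.verts ≃ Fin n := Fintype.equivFin _ with he
  set c : V → Fin n := fun v => if h : v ∈ Γ.verts then e ⟨v, h⟩ else e ⟨v₀, hv₀v⟩ with hcdef
  set d : Fin n → V := fun i => (e.symm i : V) with hddef
  have hdmem : ∀ i, d i ∈ Γ.verts := fun i => (e.symm i).2
  have hdc : ∀ v ∈ Γ.verts, d (c v) = v := by
    intro v hv
    simp only [hcdef, hddef, dif_pos hv, Equiv.symm_apply_apply]
  have hcd : ∀ i, c (d i) = i := by
    intro i
    simp only [hcdef, hddef, dif_pos (e.symm i).2]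
    rw [show (⟨((e.symm i : ↥Γ.verts) : V), (e.symm i).2⟩ : ↥Γ.verts) = e.symm i from rfl]
    exact e.apply_symm_apply i
  have hcinj : Set.InjOn c Γ.verts := by
    intro v hv w hw hvw
    rw [← hdc v hv, ← hdc w hw, hvw]
  clear_value e
  clear he
  -- sides on codes
  set LC : Set (Fin n) := {i | d i ∈ Γ.L} with hLC
  set RC : Set (Fin n) := {i | d i ∈ Γ.R} with hRC
  have hLCRC : ∀ i : Fin n, i ∈ LC ∨ i ∈ RC := fun i => hdmem i
  have hdisjC : ∀ i, i ∈ LC → i ∈ RC → False := fun i h h' => hLR (d i) h h'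
  have hcLmem : ∀ v ∈ Γ.L, c v ∈ LC := by
    intro v hv
    show d (c v) ∈ Γ.L
    rw [hdc v (Or.inl hv)]; exact hv
  have hcRmem : ∀ v ∈ Γ.R, c v ∈ RC := by
    intro v hv
    show d (c v) ∈ Γ.R
    rw [hdc v (Or.inr hv)]; exact hv
  -- the extension graph
  set E' : (Fin n × Set (Fin n)) → (Fin n × Set (Fin n)) → Prop := fun p q =>
    ((p.1 ∈ LC ∧ q.1 ∈ RC) ∨ (q.1 ∈ LC ∧ p.1 ∈ RC)) ∧ ((q.1 ∈ p.2) ↔ ¬ (p.1 ∈ q.2))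
    with hE'def
  set Γ' : BipGraph (Fin n × Set (Fin n)) :=
    { L := {p | p.1 ∈ LC}
      R := {p | p.1 ∈ RC}
      Lne := ⟨(c v₀, ∅), hcLmem v₀ hv₀⟩
      Rne := ⟨(c r₀, ∅), hcRmem r₀ hr₀⟩
      disj := Set.disjoint_left.2 fun p hp hp' => hdisjC p.1 hp hp'
      E := E'
      symm := by
        intro x y h
        exact ⟨h.1.symm, by tauto⟩
      bip := fun x y h => h.1.imp id (fun hh => ⟨hh.2, hh.1⟩) } with hΓ'
  set ι : V → (Fin n × Set (Fin n)) := fun v => (c v, {j | v ∈ Γ.L ∧ Γ.E v (d j)}) with hι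
  have hvertsuniv : Γ'.verts = Set.univ := by
    apply Set.eq_univ_of_forall
    intro p
    rcases hLCRC p.1 with h | h
    · exact Or.inl h
    · exact Or.inr h
  refine ⟨Fin n × Set (Fin n), Γ', ι, ?_, ?_, ?_, ?_, ?_, ?_⟩
  · exact Set.toFinite _
  · intro v hv w hw hvw
    exact hcinj hv hw (congrArg Prod.fst hvw)
  · rintro p ⟨v, hv, rfl⟩
    exact hcLmem v hv
  · rintro p ⟨v, hv, rfl⟩
    exact hcRmem v hv
  · -- edges preserved
    intro x hx y hy
    constructor
    · intro hE
      rcases Γ.bip x y hE with ⟨hxL, hyR⟩ | ⟨hxR, hyL⟩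
      · refine ⟨Or.inl ⟨hcLmem x hxL, hcRmem y hyR⟩, ?_⟩
        have h1 : (ι y).1 ∈ (ι x).2 := ⟨hxL, by rw [hdc y hy]; exact hE⟩
        have h2 : ¬ (ι x).1 ∈ (ι y).2 := fun h => hLR y h.1 hyR
        tauto
      · refine ⟨Or.inr ⟨hcLmem y hyL, hcRmem x hxR⟩, ?_⟩
        have h1 : ¬ (ι y).1 ∈ (ι x).2 := fun h => hLR x h.1 hxR
        have h2 : (ι x).1 ∈ (ι y).2 := ⟨hyL, by rw [hdc x hx]; exact Γ.symm x y hE⟩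
        tauto
    · rintro ⟨hside, hxor⟩
      rcases hside with ⟨hxL, hyR⟩ | ⟨hyL, hxR⟩
      · -- x ∈ L, y ∈ R
        have hyR' : y ∈ Γ.R := by rw [← hdc y hy]; exact hyR
        have h2 : ¬ (ι x).1 ∈ (ι y).2 := fun h => hLR y h.1 hyR'
        have h1 : (ι y).1 ∈ (ι x).2 := by tauto
        have := h1.2
        rwa [hdc y hy] at this
      · have hxR' : x ∈ Γ.R := by rw [← hdc x hx]; exact hxR
        have h1 : ¬ (ι y).1 ∈ (ι x).2 := fun h => hLR x h.1 hxR'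
        have h2 : (ι x).1 ∈ (ι y).2 := by tauto
        have := h2.2
        rw [hdc x hx] at this
        exact Γ.symm y x this
  · -- the extension property
    rintro s f ⟨hsub, hinj, hfL, hfR, hpresE⟩
    -- extend the coded map to a side-preserving permutation
    set sc : Set (Fin n) := {i | d i ∈ s} with hsc
    set fc : Fin n → Fin n := fun i => c (f (d i)) with hfc
    have hfvert : ∀ x ∈ s, f x ∈ Γ.verts := by
      intro x hx
      rcases hsub hx with h | h
      · exact Or.inl (hfL x hx h)
      · exact Or.inr (hfR x hx h)
    have hfcinjL : Set.InjOn fc (sc ∩ LC) := by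
      rintro i ⟨hi, hiL⟩ j ⟨hj, hjL⟩ hij
      have h1 : f (d i) = f (d j) :=
        hcinj (hfvert _ hi) (hfvert _ hj) hij
      have h2 : d i = d j := hinj hi hj h1
      rw [← hcd i, ← hcd j, h2]
    have hfcinjR : Set.InjOn fc (sc ∩ RC) := by
      rintro i ⟨hi, hiL⟩ j ⟨hj, hjL⟩ hij
      have h1 : f (d i) = f (d j) :=
        hcinj (hfvert _ hi) (hfvert _ hj) hij
      have h2 : d i = d j := hinj hi hj h1
      rw [← hcd i, ← hcd j, h2]
    have hfcmapL : Set.MapsTo fc (sc ∩ LC) LC :=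
      fun i hi => hcLmem _ (hfL (d i) hi.1 hi.2)
    have hfcmapR : Set.MapsTo fc (sc ∩ RC) RC :=
      fun i hi => hcRmem _ (hfR (d i) hi.1 hi.2)
    obtain ⟨πL, hπL1, hπL2, hπL3⟩ :=
      exists_perm_extend_mapsTo LC (sc ∩ LC) fc Set.inter_subset_right hfcinjL hfcmapL
    obtain ⟨πR, hπR1, hπR2, hπR3⟩ :=
      exists_perm_extend_mapsTo RC (sc ∩ RC) fc Set.inter_subset_right hfcinjR hfcmapR
    set π : Equiv.Perm (Fin n) := πL.trans πR with hπdef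
    have hπLC : ∀ i ∈ LC, π i ∈ LC := by
      intro i hi
      have h1 : πL i ∈ LC := hπL2 i hi
      have h2 : πL i ∉ RC := fun h => hdisjC _ h1 h
      show πR (πL i) ∈ LC
      rw [hπR3 _ h2]; exact h1
    have hπRC : ∀ i ∈ RC, π i ∈ RC := by
      intro i hi
      have h1 : i ∉ LC := fun h => hdisjC _ h hi
      show πR (πL i) ∈ RC
      rw [hπL3 _ h1]
      exact hπR2 i hi
    have hπLC' : ∀ i, π i ∈ LC ↔ i ∈ LC := by
      intro i
      refine ⟨fun h => ?_, hπLC i⟩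
      by_contra hc
      rcases hLCRC i with h' | h'
      · exact hc h'
      · exact hdisjC _ h (hπRC i h')
    have hπRC' : ∀ i, π i ∈ RC ↔ i ∈ RC := by
      intro i
      refine ⟨fun h => ?_, hπRC i⟩
      by_contra hc
      rcases hLCRC i with h' | h'
      · exact hdisjC _ (hπLC i h') h
      · exact hc h'
    have hπext : ∀ i ∈ sc, π i = fc i := by
      intro i hi
      rcases hLCRC i with h | h
      · have h1 : πL i = fc i := hπL1 i ⟨hi, h⟩
        have h2 : fc i ∈ LC := hfcmapL ⟨hi, h⟩
        show πR (πL i) = fc i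
        rw [h1, hπR3 _ (fun hh => hdisjC _ h2 hh)]
      · have h1 : i ∉ LC := fun hh => hdisjC _ hh h
        show πR (πL i) = fc i
        rw [hπL3 _ h1]
        exact hπR1 i ⟨hi, h⟩
    have hπc : ∀ x ∈ s, π (c x) = c (f x) := by
      intro x hx
      have h1 : c x ∈ sc := by
        show d (c x) ∈ s
        rw [hdc x (hsub hx)]; exact hx
      rw [hπext _ h1, hfc]
      simp only []
      rw [hdc x (hsub hx)]
    -- the flip set
    set S : V → Set (Fin n) := fun v => {j | v ∈ Γ.L ∧ Γ.E v (d j)} with hS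
    set Row : Fin n → Set (Fin n) := fun i =>
      {j | ∃ x, x ∈ s ∧ x ∈ Γ.L ∧ c (f x) = i ∧ ((π.symm j ∈ S x) ↔ ¬ j ∈ S (f x))}
      with hRow
    set F : Fin n → Set (Fin n) := fun i => {j | j ∈ Row i ∨ i ∈ Row j} with hF
    have hFsymm : ∀ i j, j ∈ F i ↔ i ∈ F j := by
      intro i j
      simp only [hF, Set.mem_setOf_eq]
      tauto
    -- the automorphism
    set g : (Fin n × Set (Fin n)) → (Fin n × Set (Fin n)) := fun p =>
      (π p.1, {j | (π.symm j ∈ p.2) ↔ ¬ (j ∈ F (π p.1))}) with hg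
    set ginv : (Fin n × Set (Fin n)) → (Fin n × Set (Fin n)) := fun p =>
      (π.symm p.1, {k | (π k ∈ p.2) ↔ ¬ (π k ∈ F p.1)}) with hginv
    have hleft : Function.LeftInverse ginv g := by
      intro p
      simp only [hg, hginv, Equiv.symm_apply_apply]
      refine Prod.ext rfl ?_
      ext k
      simp only [Set.mem_setOf_eq, Equiv.symm_apply_apply]
      by_cases hk : π k ∈ F (π p.1) <;> tauto
    have hright : Function.RightInverse ginv g := by
      intro p
      simp only [hg, hginv, Equiv.apply_symm_apply]
      refine Prod.ext rfl ?_
      ext j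
      simp only [Set.mem_setOf_eq, Equiv.apply_symm_apply]
      by_cases hj : j ∈ F p.1 <;> tauto
    have hgbij : Function.Bijective g := ⟨hleft.injective, hright.surjective⟩
    refine ⟨g, ⟨?_, ?_, ?_, ?_⟩, ?_⟩
    · rw [hvertsuniv]
      exact hgbij.bijOn_univ
    · intro p hp
      exact hπLC p.1 hp
    · intro p hp
      exact hπRC p.1 hp
    · -- edges preserved by g
      intro p hp q hq
      show E' p q ↔ E' (g p) (g q)
      have hside0 : (p.1 ∈ LC ∧ q.1 ∈ RC ∨ q.1 ∈ LC ∧ p.1 ∈ RC) ↔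
          (π p.1 ∈ LC ∧ π q.1 ∈ RC ∨ π q.1 ∈ LC ∧ π p.1 ∈ RC) := by
        rw [hπLC' p.1, hπRC' q.1, hπLC' q.1, hπRC' p.1]
      simp only [hE'def, hg, Set.mem_setOf_eq, Equiv.symm_apply_apply]
      rw [hFsymm (π q.1) (π p.1)]
      exact and_congr hside0 magic_logic1
    · -- g extends f through ι
      intro x hx
      have hxv : x ∈ Γ.verts := hsub hx
      have hπcx := hπc x hx
      simp only [hg, hι]
      refine Prod.ext hπcx ?_
      ext j
      simp only [Set.mem_setOf_eq, hπcx]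
      -- goal: ((π.symm j ∈ S x) ↔ ¬ j ∈ F (c (f x))) ↔ j ∈ S (f x)
      show ((π.symm j ∈ S x) ↔ ¬ j ∈ F (c (f x))) ↔ j ∈ S (f x)
      rcases hxv with hxL | hxR
      · -- x ∈ L
        have hfxL : f x ∈ Γ.L := hfL x hx hxL
        have hrow : j ∈ Row (c (f x)) ↔ ((π.symm j ∈ S x) ↔ ¬ j ∈ S (f x)) := by
          constructor
          · rintro ⟨x', hx's, hx'L, hcfx', hcond⟩
            have hfeq : f x' = f x :=
              hcinj (hfvert _ hx's) (hfvert _ hx) hcfx'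
            have hxeq : x' = x := hinj hx's hx hfeq
            rw [hxeq] at hcond
            exact hcond
          · intro hcond
            exact ⟨x, hx, hxL, rfl, hcond⟩
        have hrow2 : ¬ (c (f x)) ∈ Row j := by
          rintro ⟨x', hx's, hx'L, hcfx', hcond⟩
          have hiLC : c (f x) ∈ LC := hcLmem _ hfxL
          have h1 : ¬ π.symm (c (f x)) ∈ S x' := by
            rintro ⟨_, hEx⟩
            have hsymmLC : π.symm (c (f x)) ∈ LC := by
              rcases hLCRC (π.symm (c (f x))) with h | h
              · exact h
              · exfalso
                have := hπRC _ h
                rw [Equiv.apply_symm_apply] at this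
                exact hdisjC _ hiLC this
            exact hLL x' _ hx'L hsymmLC hEx
          have h2 : ¬ (c (f x)) ∈ S (f x') := by
            rintro ⟨_, hEx⟩
            have : d (c (f x)) ∈ Γ.L := by
              rw [hdc _ (Or.inl hfxL)]; exact hfxL
            exact hLL (f x') _ (hfL x' hx's hx'L) this hEx
          exact h1 (hcond.2 h2)
        have hkey : j ∈ F (c (f x)) ↔ ((π.symm j ∈ S x) ↔ ¬ j ∈ S (f x)) := by
          simp only [hF, Set.mem_setOf_eq]
          constructor
          · rintro (h | h)
            · exact hrow.1 h
            · exact absurd h hrow2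
          · intro h
            exact Or.inl (hrow.2 h)
        exact magic_logic2 hkey
      · -- x ∈ R
        have hfxR : f x ∈ Γ.R := hfR x hx hxR
        have hSx : ¬ π.symm j ∈ S x := fun h => hLR x h.1 hxR
        have hSfx : ¬ j ∈ S (f x) := fun h => hLR (f x) h.1 hfxR
        have hFempty : ¬ j ∈ F (c (f x)) := by
          rintro (⟨x', hx's, hx'L, hcfx', _⟩ | ⟨x', hx's, hx'L, hcfx', hcond⟩)
          · -- Row (c (f x)) is empty
            have hfeq : f x' = f x :=
              hcinj (hfvert _ hx's) (hfvert _ hx) hcfx'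
            exact hLR (f x) (hfeq ▸ hfL x' hx's hx'L) hfxR
          · -- c (f x) ∈ Row j is impossible
            have hsymm : π.symm (c (f x)) = c x := by
              rw [← hπc x hx, Equiv.symm_apply_apply]
            have h1 : π.symm (c (f x)) ∈ S x' ↔ Γ.E x' x := by
              rw [hsymm]
              constructor
              · intro h
                have := h.2
                rwa [hdc x (hsub hx)] at this
              · intro h
                exact ⟨hx'L, by rw [hdc x (hsub hx)]; exact h⟩
            have h2 : (c (f x)) ∈ S (f x') ↔ Γ.E (f x') (f x) := by
              constructor
              · intro h
                have := h.2
                rwa [hdc _ (Or.inr hfxR)] at this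
              · intro h
                exact ⟨hfL x' hx's hx'L, by rw [hdc _ (Or.inr hfxR)]; exact h⟩
            have h3 : Γ.E x' x ↔ Γ.E (f x') (f x) := hpresE x' hx's x hx
            rw [h1, h2, ← h3] at hcond
            exact iff_not_self hcond
        exact magic_logic3 hFempty hSx hSfx
end

section
/- If κ < λ' ≤ λ and Γ is a (κ, λ) saS graph, then Γ has an induced subgraph Γ' which is a (κ, λ') saS graph. -/
/-! If `L` were finite, homogeneity would make all neighbourhoods of vertices of `R` subsets of
`L` of one size `k`, any two of them meeting in the same number of points, and would make every
`k`-subset of `L` a neighbourhood. For `2 ≤ k ≤ |L| - 2` swapping one, resp. two, points of a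
neighbourhood with non-neighbours gives two of them meeting it in different numbers of points;
otherwise neighbourhoods are singletons or co-singletons and, as they determine their vertex,
`|R| ≤ |L|`. So `L` is infinite and `λ'` is infinite.

Fix for every finite partial map an automorphism extending it when there is one, and take a
Löwenheim–Skolem hull `U` of `L` together with `λ'` vertices of `R`: a set of size `λ'` closed
under these automorphisms and their inverses. Each finite partial isomorphism of the graph induced
on `U` is then extended by an automorphism mapping `U` onto itself. -/

open Set Function Cardinal

universe u

namespace Cardinal

lemma mk_iUnion_le_of_le {α ι : Type u} {μ : Cardinal.{u}} (hμ : ℵ₀ ≤ μ) {f : ι → Set α}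
    (hι : #ι ≤ μ) (hf : ∀ i, #(f i) ≤ μ) : #(⋃ i, f i) ≤ μ :=
  (mk_iUnion_le f).trans <| (mul_le_mul' hι (ciSup_le' hf)).trans (mul_eq_self hμ).le

lemma mk_finset_le_of_le {α : Type u} {μ : Cardinal.{u}} (hμ : ℵ₀ ≤ μ) (hα : #α ≤ μ) :
    #(Finset α) ≤ μ := by
  rcases finite_or_infinite α with hfin | hinf
  · exact mk_le_aleph0.trans hμ
  · rwa [mk_finset_of_infinite]

end Cardinal

theorem exists_superset_mk_le_forall_mapsTo {α : Type u} {μ : Cardinal.{u}} (hμ : ℵ₀ ≤ μ)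
    {S : Set α} (hS : #S ≤ μ) (G : Finset α → Set (α → α)) (hG : ∀ t, #(G t) ≤ μ) :
    ∃ U, S ⊆ U ∧ #U ≤ μ ∧ ∀ t : Finset α, ↑t ⊆ U → ∀ g ∈ G t, MapsTo g U U := by
  classical
  let step : Set α → Set α := fun X =>
    X ∪ ⋃ t : Finset X, ⋃ g : G (t.map (Embedding.subtype _)), g.1 '' X
  have step_le : ∀ X : Set α, #X ≤ μ → #(step X) ≤ μ := fun X hX =>
    (mk_union_le _ _).trans <| (add_le_add hX <| mk_iUnion_le_of_le hμ (mk_finset_le_of_le hμ hX)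
      fun _ => mk_iUnion_le_of_le hμ (hG _) fun _ => mk_image_le.trans hX).trans (add_eq_self hμ).le
  let W : ℕ → Set α := fun n => step^[n] S
  have hW_succ : ∀ n, W (n + 1) = step (W n) := fun n => iterate_succ_apply' step n S
  have hW : Monotone W := monotone_nat_of_le_succ fun n => hW_succ n ▸ subset_union_left
  refine ⟨⋃ n, W n, subset_iUnion W 0, ?_, fun t ht g hg x hx => ?_⟩
  · have hW_le : ∀ n, #(W n) ≤ μ := fun n => by
      induction n with
      | zero => exact hS
      | succ n ih => exact hW_succ n ▸ step_le _ ih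
    refine mk_subtype_le_of_countable_eventually_mem (l := Filter.atTop) (fun x hx => ?_) hW_le
    obtain ⟨m, hm⟩ := mem_iUnion.mp hx
    exact Filter.eventually_atTop.mpr ⟨m, fun i hi => hW hi hm⟩
  · obtain ⟨n, hn⟩ := hW.directed_le.exists_mem_subset_of_finset_subset_biUnion ht
    obtain ⟨m, hm⟩ := mem_iUnion.mp hx
    set k := max n m
    have htk : ∀ y ∈ t, y ∈ W k := fun y hy => hW (le_max_left n m) (hn hy)
    refine mem_iUnion.mpr ⟨k + 1, hW_succ k ▸ Or.inr (mem_iUnion.mpr ⟨t.subtype (· ∈ W k), ?_⟩)⟩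
    refine mem_iUnion.mpr ⟨⟨g, ?_⟩, x, hW (le_max_right n m) hm, rfl⟩
    rwa [Finset.subtype_map_of_mem htk]

lemma inter_image_swap_image_swap_ssubset {α : Type*} [DecidableEq α] {A : Set α}
    {x₁ x₂ y₁ y₂ : α} (hx₁ : x₁ ∈ A) (hx₂ : x₂ ∈ A) (hy₁ : y₁ ∉ A) (hy₂ : y₂ ∉ A)
    (hx : x₁ ≠ x₂) (hy : y₁ ≠ y₂) :
    A ∩ Equiv.swap x₂ y₂ '' (Equiv.swap x₁ y₁ '' A) ⊂ A ∩ Equiv.swap x₁ y₁ '' A := by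
  set B := Equiv.swap x₁ y₁ '' A
  have hx₂B : x₂ ∈ B := by
    rw [mem_image_equiv, Equiv.symm_swap,
      Equiv.swap_apply_of_ne_of_ne hx.symm (ne_of_mem_of_not_mem hx₂ hy₁)]
    exact hx₂
  have hy₂B : y₂ ∉ B := by
    rw [mem_image_equiv, Equiv.symm_swap,
      Equiv.swap_apply_of_ne_of_ne (ne_of_mem_of_not_mem hx₁ hy₂).symm hy.symm]
    exact hy₂
  have hsub : A ∩ Equiv.swap x₂ y₂ '' B ⊆ A ∩ B := by
    rintro a ⟨ha, haD⟩
    rw [mem_image_equiv, Equiv.symm_swap] at haD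
    refine ⟨ha, ?_⟩
    rcases eq_or_ne a x₂ with rfl | ha₁
    · exact absurd (Equiv.swap_apply_left a y₂ ▸ haD) hy₂B
    rcases eq_or_ne a y₂ with rfl | ha₂
    · exact absurd ha hy₂
    rwa [Equiv.swap_apply_of_ne_of_ne ha₁ ha₂] at haD
  refine (ssubset_iff_of_subset hsub).mpr ⟨x₂, ⟨hx₂, hx₂B⟩, fun h => hy₂B ?_⟩
  have := h.2
  rwa [mem_image_equiv, Equiv.symm_swap, Equiv.swap_apply_left] at this

namespace BipGraph

variable {V : Type*} {Γ : BipGraph V} {f g : V → V} {s U : Set V} {x y r r' : V}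

lemma L_subset_verts : Γ.L ⊆ Γ.verts := subset_union_left

lemma R_subset_verts : Γ.R ⊆ Γ.verts := subset_union_right

lemma not_E_of_mem_L (hx : x ∈ Γ.L) (hy : y ∈ Γ.L) : ¬ Γ.E x y := fun h =>
  (Γ.bip x y h).elim (fun h' => Γ.disj.notMem_of_mem_left hy h'.2)
    (fun h' => Γ.disj.notMem_of_mem_left hx h'.1)

lemma not_E_of_mem_R (hx : x ∈ Γ.R) (hy : y ∈ Γ.R) : ¬ Γ.E x y := fun h =>
  (Γ.bip x y h).elim (fun h' => Γ.disj.notMem_of_mem_left h'.1 hx)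
    (fun h' => Γ.disj.notMem_of_mem_left h'.2 hy)

lemma nbr_subset_verts (v : V) : Γ.nbr v ⊆ Γ.verts := fun u hu =>
  (Γ.bip v u hu).elim (fun h => R_subset_verts h.2) (fun h => L_subset_verts h.2)

lemma nbr_subset_L_s10 (hr : r ∈ Γ.R) : Γ.nbr r ⊆ Γ.L := fun u hu =>
  (Γ.bip r u hu).elim (fun h => absurd hr (Γ.disj.notMem_of_mem_left h.1)) And.right

lemma isAuto_id (Γ : BipGraph V) : Γ.IsAuto id :=
  ⟨bijOn_id _, mapsTo_id _, mapsTo_id _, fun _ _ _ _ => Iff.rfl⟩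

namespace IsAuto

lemma mapsTo_L (hg : Γ.IsAuto g) : MapsTo g Γ.L Γ.L := hg.2.1

lemma mapsTo_R (hg : Γ.IsAuto g) : MapsTo g Γ.R Γ.R := hg.2.2.1

lemma injOn (hg : Γ.IsAuto g) : InjOn g Γ.verts := hg.1.injOn

lemma E_iff (hg : Γ.IsAuto g) (hx : x ∈ Γ.verts) (hy : y ∈ Γ.verts) :
    Γ.E x y ↔ Γ.E (g x) (g y) :=
  hg.2.2.2 x hx y hy

lemma image_nbr (hg : Γ.IsAuto g) (hx : x ∈ Γ.verts) : g '' Γ.nbr x = Γ.nbr (g x) := by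
  ext u
  constructor
  · rintro ⟨w, hw, rfl⟩
    exact (hg.E_iff hx (nbr_subset_verts x hw)).mp hw
  · intro hu
    obtain ⟨w, hw, rfl⟩ := hg.1.surjOn (nbr_subset_verts _ hu)
    exact ⟨w, (hg.E_iff hx hw).mpr hu, rfl⟩

lemma bijOn_inter [Nonempty V] (hg : Γ.IsAuto g) (hU : MapsTo g U U)
    (hU' : MapsTo (invFunOn g Γ.verts) U U) : BijOn g (Γ.verts ∩ U) (Γ.verts ∩ U) := by
  refine ⟨fun x hx => ⟨hg.1.mapsTo hx.1, hU hx.2⟩, hg.injOn.mono inter_subset_left,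
    fun y hy => ?_⟩
  have hsurj : ∃ x ∈ Γ.verts, g x = y := hg.1.surjOn hy.1
  exact ⟨invFunOn g Γ.verts y, ⟨invFunOn_mem hsurj, hU' hy.2⟩, invFunOn_eq hsurj⟩

end IsAuto

lemma isPartialIso_of_subset_L (hsL : s ⊆ Γ.L) (hf : InjOn f s) (hfs : MapsTo f s Γ.L) :
    Γ.IsPartialIso Γ s f :=
  ⟨hsL.trans L_subset_verts, hf, fun _ hx _ => hfs hx,
    fun _ hx hxR => absurd hxR (Γ.disj.notMem_of_mem_left (hsL hx)),
    fun _ hx _ hy => iff_of_false (not_E_of_mem_L (hsL hx) (hsL hy))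
      (not_E_of_mem_L (hfs hx) (hfs hy))⟩

lemma isPartialIso_of_subset_R (hsR : s ⊆ Γ.R) (hf : InjOn f s) (hfs : MapsTo f s Γ.R) :
    Γ.IsPartialIso Γ s f :=
  ⟨hsR.trans R_subset_verts, hf, fun _ hx hxL => absurd (hsR hx) (Γ.disj.notMem_of_mem_left hxL),
    fun _ hx _ => hfs hx,
    fun _ hx _ hy => iff_of_false (not_E_of_mem_R (hsR hx) (hsR hy))
      (not_E_of_mem_R (hfs hx) (hfs hy))⟩

lemma mk_R_le_mk_L_of_forall_nbr_eq (hinj : InjOn Γ.nbr Γ.R) (c : V → Set V)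
    (hc : ∀ r ∈ Γ.R, ∃ ℓ ∈ Γ.L, Γ.nbr r = c ℓ) : #Γ.R ≤ #Γ.L :=
  calc #Γ.R = #(Γ.nbr '' Γ.R) := (mk_image_eq_of_injOn _ _ hinj).symm
    _ ≤ #(c '' Γ.L) := mk_le_mk_of_subset <| by
        rintro _ ⟨r, hr, rfl⟩
        obtain ⟨ℓ, hℓ, h⟩ := hc r hr
        exact ⟨ℓ, hℓ, h.symm⟩
    _ ≤ #Γ.L := mk_image_le

namespace Homog

lemma exists_isAuto_eqOn_of_subset_L (hH : Γ.Homog) (hs : s.Finite) (hsL : s ⊆ Γ.L)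
    (hf : InjOn f s) (hfs : MapsTo f s Γ.L) : ∃ g, Γ.IsAuto g ∧ EqOn f g s :=
  hH s f hs (isPartialIso_of_subset_L hsL hf hfs)

lemma exists_isAuto_pair (hH : Γ.Homog) {r₁ r₂ r₁' r₂' : V} (h₁ : r₁ ∈ Γ.R) (h₂ : r₂ ∈ Γ.R)
    (h₁' : r₁' ∈ Γ.R) (h₂' : r₂' ∈ Γ.R) (h : r₁ = r₂ ↔ r₁' = r₂') :
    ∃ g, Γ.IsAuto g ∧ g r₁ = r₁' ∧ g r₂ = r₂' := by
  classical
  let f : V → V := fun x => if x = r₁ then r₁' else r₂'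
  have hf₁ : f r₁ = r₁' := if_pos rfl
  have hf₂ : f r₂ = r₂' := by
    by_cases h₂₁ : r₂ = r₁
    · exact (if_pos h₂₁).trans (h.mp h₂₁.symm)
    · exact if_neg h₂₁
  have hinj : InjOn f {r₁, r₂} := by
    rintro x (rfl | rfl) y (rfl | rfl) hxy
    · rfl
    · exact h.mpr (hf₁ ▸ hf₂ ▸ hxy)
    · exact (h.mpr (hf₁ ▸ hf₂ ▸ hxy.symm)).symm
    · rfl
  have hfR : MapsTo f {r₁, r₂} Γ.R := fun x _ => by
    dsimp only [f]
    split_ifs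
    exacts [h₁', h₂']
  obtain ⟨g, hg, hfg⟩ := hH {r₁, r₂} f (toFinite _)
    (isPartialIso_of_subset_R (insert_subset h₁ (singleton_subset_iff.mpr h₂)) hinj hfR)
  exact ⟨g, hg, (hfg (mem_insert _ _)).symm.trans hf₁,
    (hfg (mem_insert_of_mem _ rfl)).symm.trans hf₂⟩

lemma exists_isAuto_apply_eq (hH : Γ.Homog) (hr : r ∈ Γ.R) (hr' : r' ∈ Γ.R) :
    ∃ g, Γ.IsAuto g ∧ g r = r' :=
  let ⟨g, hg, hgr, _⟩ := hH.exists_isAuto_pair hr hr hr' hr' (iff_of_true rfl rfl)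
  ⟨g, hg, hgr⟩

lemma nbr_nonempty (hH : Γ.Homog) (hNE : ¬ Γ.IsEmptyG) (hr : r ∈ Γ.R) :
    (Γ.nbr r).Nonempty := by
  obtain ⟨r₀, hr₀, ℓ, hℓ, hE⟩ : ∃ r₀ ∈ Γ.R, ∃ ℓ ∈ Γ.L, Γ.E r₀ ℓ := by
    simp only [IsEmptyG, not_forall, not_not] at hNE
    obtain ⟨x, y, hxy⟩ := hNE
    rcases Γ.bip x y hxy with ⟨hx, hy⟩ | ⟨hx, hy⟩
    exacts [⟨y, hy, x, hx, Γ.symm x y hxy⟩, ⟨x, hx, y, hy, hxy⟩]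
  obtain ⟨g, hg, rfl⟩ := hH.exists_isAuto_apply_eq hr₀ hr
  exact ⟨g ℓ, (hg.E_iff (R_subset_verts hr₀) (L_subset_verts hℓ)).mp hE⟩

lemma diff_nbr_nonempty (hH : Γ.Homog) (hNC : ¬ Γ.IsComplete) (hr : r ∈ Γ.R) :
    (Γ.L \ Γ.nbr r).Nonempty := by
  simp only [IsComplete, not_forall] at hNC
  obtain ⟨ℓ, hℓ, r₀, hr₀, hE⟩ := hNC
  obtain ⟨g, hg, rfl⟩ := hH.exists_isAuto_apply_eq hr₀ hr
  exact ⟨g ℓ, hg.mapsTo_L hℓ,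
    fun h => hE (Γ.symm _ _ ((hg.E_iff (R_subset_verts hr₀) (L_subset_verts hℓ)).mpr h))⟩

lemma ncard_nbr_eq (hH : Γ.Homog) (hr : r ∈ Γ.R) (hr' : r' ∈ Γ.R) :
    (Γ.nbr r).ncard = (Γ.nbr r').ncard := by
  obtain ⟨g, hg, rfl⟩ := hH.exists_isAuto_apply_eq hr hr'
  rw [← hg.image_nbr (R_subset_verts hr), (hg.injOn.mono (nbr_subset_verts r)).ncard_image]

lemma ncard_nbr_inter_eq (hH : Γ.Homog) {r₁ r₂ r₁' r₂' : V} (h₁ : r₁ ∈ Γ.R) (h₂ : r₂ ∈ Γ.R)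
    (h₁' : r₁' ∈ Γ.R) (h₂' : r₂' ∈ Γ.R) (hne : r₁ ≠ r₂) (hne' : r₁' ≠ r₂') :
    (Γ.nbr r₁ ∩ Γ.nbr r₂).ncard = (Γ.nbr r₁' ∩ Γ.nbr r₂').ncard := by
  obtain ⟨g, hg, rfl, rfl⟩ := hH.exists_isAuto_pair h₁ h₂ h₁' h₂' (iff_of_false hne hne')
  rw [← hg.image_nbr (R_subset_verts h₁), ← hg.image_nbr (R_subset_verts h₂),
    ← hg.injOn.image_inter (nbr_subset_verts _) (nbr_subset_verts _),
    (hg.injOn.mono (inter_subset_left.trans (nbr_subset_verts _))).ncard_image]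

lemma exists_nbr_eq_image (hH : Γ.Homog) (hr : r ∈ Γ.R) (hfin : (Γ.nbr r).Finite)
    (hf : InjOn f (Γ.nbr r)) (hfL : MapsTo f (Γ.nbr r) Γ.L) :
    ∃ r' ∈ Γ.R, Γ.nbr r' = f '' Γ.nbr r := by
  obtain ⟨g, hg, hfg⟩ := hH.exists_isAuto_eqOn_of_subset_L hfin (nbr_subset_L_s10 hr) hf hfL
  exact ⟨g r, hg.mapsTo_R hr, by rw [← hg.image_nbr (R_subset_verts hr), hfg.image_eq]⟩

lemma injOn_nbr (hH : Γ.Homog) (hNE : ¬ Γ.IsEmptyG) (hNC : ¬ Γ.IsComplete) :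
    InjOn Γ.nbr Γ.R := by
  intro r hr r' hr' heq
  by_contra hne
  have hall : ∀ r'' ∈ Γ.R, Γ.nbr r'' = Γ.nbr r := by
    intro r'' hr''
    rcases eq_or_ne r r'' with rfl | hne''
    · rfl
    obtain ⟨g, hg, hgr, hgr'⟩ := hH.exists_isAuto_pair hr hr' hr hr'' (iff_of_false hne hne'')
    rw [← hgr', ← hg.image_nbr (R_subset_verts hr'), ← heq, hg.image_nbr (R_subset_verts hr), hgr]
  obtain ⟨ℓa, hℓa⟩ := hH.nbr_nonempty hNE hr
  obtain ⟨ℓb, hℓbL, hℓb⟩ := hH.diff_nbr_nonempty hNC hr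
  obtain ⟨g, hg, hgℓ⟩ := hH.exists_isAuto_eqOn_of_subset_L (f := fun _ => ℓb) (toFinite {ℓa})
    (singleton_subset_iff.mpr (nbr_subset_L_s10 hr hℓa)) (injOn_singleton _ _) fun _ _ => hℓbL
  apply hℓb
  rw [← hall (g r) (hg.mapsTo_R hr), ← hg.image_nbr (R_subset_verts hr)]
  exact ⟨ℓa, hℓa, (hgℓ rfl).symm⟩

lemma ncard_nbr_le_one_or_ncard_diff_nbr_le_one (hH : Γ.Homog) (hL : Γ.L.Finite)
    (hr : r ∈ Γ.R) : (Γ.nbr r).ncard ≤ 1 ∨ (Γ.L \ Γ.nbr r).ncard ≤ 1 := by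
  classical
  by_contra! h
  have hfin : ∀ {r}, r ∈ Γ.R → (Γ.nbr r).Finite := fun hr => hL.subset (nbr_subset_L_s10 hr)
  obtain ⟨x₁, hx₁, x₂, hx₂, hx⟩ := (one_lt_ncard (hfin hr)).mp h.1
  obtain ⟨y₁, hy₁, y₂, hy₂, hy⟩ := (one_lt_ncard hL.sdiff).mp h.2
  have hswap : ∀ {x y}, x ∈ Γ.L → y ∈ Γ.L → MapsTo (Equiv.swap x y) Γ.L Γ.L := by
    intro x y hx hy z hz
    rw [Equiv.swap_apply_def]
    split_ifs <;> assumption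
  obtain ⟨r₁, hr₁, hB⟩ := hH.exists_nbr_eq_image hr (hfin hr) (Equiv.injective _).injOn
    ((hswap (nbr_subset_L_s10 hr hx₁) hy₁.1).mono_left (nbr_subset_L_s10 hr))
  obtain ⟨r₂, hr₂, hD⟩ := hH.exists_nbr_eq_image hr₁ (hfin hr₁) (Equiv.injective _).injOn
    ((hswap (nbr_subset_L_s10 hr hx₂) hy₂.1).mono_left (nbr_subset_L_s10 hr₁))
  have hss := inter_image_swap_image_swap_ssubset hx₁ hx₂ hy₁.2 hy₂.2 hx hy
  rw [← hB, ← hD] at hss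
  have hr₁ne : r ≠ r₁ := by
    rintro rfl
    rw [hB, mem_image_equiv, Equiv.symm_swap, Equiv.swap_apply_left] at hx₁
    exact hy₁.2 hx₁
  have hr₂ne : r ≠ r₂ := by
    rintro rfl
    rw [inter_self] at hss
    exact hss.not_subset inter_subset_left
  exact (ncard_lt_ncard hss ((hfin hr).inter_of_left _)).ne
    (hH.ncard_nbr_inter_eq hr hr₂ hr hr₁ hr₂ne hr₁ne)

lemma mk_R_le_mk_L (hH : Γ.Homog) (hNE : ¬ Γ.IsEmptyG) (hNC : ¬ Γ.IsComplete)
    (hL : Γ.L.Finite) : #Γ.R ≤ #Γ.L := by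
  obtain ⟨r₀, hr₀⟩ := Γ.Rne
  have hinj := hH.injOn_nbr hNE hNC
  rcases hH.ncard_nbr_le_one_or_ncard_diff_nbr_le_one hL hr₀ with h | h
  · refine mk_R_le_mk_L_of_forall_nbr_eq hinj (fun ℓ => {ℓ}) fun r hr => ?_
    have h1 : (Γ.nbr r).ncard = 1 :=
      le_antisymm ((hH.ncard_nbr_eq hr hr₀).trans_le h)
        ((ncard_pos (hL.subset (nbr_subset_L_s10 hr))).mpr (hH.nbr_nonempty hNE hr))
    obtain ⟨ℓ, hℓ⟩ := ncard_eq_one.mp h1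
    exact ⟨ℓ, nbr_subset_L_s10 hr (hℓ ▸ rfl), hℓ⟩
  · refine mk_R_le_mk_L_of_forall_nbr_eq hinj (fun ℓ => Γ.L \ {ℓ}) fun r hr => ?_
    have h1 : (Γ.L \ Γ.nbr r).ncard = 1 := by
      refine le_antisymm ?_ ((ncard_pos hL.sdiff).mpr (hH.diff_nbr_nonempty hNC hr))
      rwa [ncard_sdiff (nbr_subset_L_s10 hr) (hL.subset (nbr_subset_L_s10 hr)), hH.ncard_nbr_eq hr hr₀,
        ← ncard_sdiff (nbr_subset_L_s10 hr₀) (hL.subset (nbr_subset_L_s10 hr₀))]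
    obtain ⟨ℓ, hℓ⟩ := ncard_eq_one.mp h1
    exact ⟨ℓ, (hℓ ▸ mem_singleton ℓ : ℓ ∈ Γ.L \ Γ.nbr r).1,
      by rw [← hℓ, sdiff_sdiff_cancel_left (nbr_subset_L_s10 hr)]⟩

lemma infinite_L (hH : Γ.Homog) (hNE : ¬ Γ.IsEmptyG) (hNC : ¬ Γ.IsComplete)
    (hLR : #Γ.L < #Γ.R) : Γ.L.Infinite := fun hL =>
  (hH.mk_R_le_mk_L hNE hNC hL).not_gt hLR

end Homog

def induce (Γ : BipGraph V) (U : Set V) (hL : (Γ.L ∩ U).Nonempty) (hR : (Γ.R ∩ U).Nonempty) :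
    BipGraph V where
  L := Γ.L ∩ U
  R := Γ.R ∩ U
  Lne := hL
  Rne := hR
  disj := Γ.disj.mono inter_subset_left inter_subset_left
  E x y := Γ.E x y ∧ x ∈ U ∧ y ∈ U
  symm x y h := ⟨Γ.symm x y h.1, h.2.2, h.2.1⟩
  bip x y h := (Γ.bip x y h.1).imp (fun h' => ⟨⟨h'.1, h.2.1⟩, h'.2, h.2.2⟩)
    (fun h' => ⟨⟨h'.1, h.2.1⟩, h'.2, h.2.2⟩)

section induce

variable {hL : (Γ.L ∩ U).Nonempty} {hR : (Γ.R ∩ U).Nonempty}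

lemma verts_induce : (Γ.induce U hL hR).verts = Γ.verts ∩ U :=
  (union_inter_distrib_right _ _ _).symm

lemma E_induce_iff (hx : x ∈ U) (hy : y ∈ U) : (Γ.induce U hL hR).E x y ↔ Γ.E x y :=
  and_iff_left ⟨hx, hy⟩

lemma homog_induce
    (hU : ∀ s f, s.Finite → s ⊆ U → MapsTo f s U → Γ.IsPartialIso Γ s f →
      ∃ g, Γ.IsAuto g ∧ EqOn f g s ∧ BijOn g (Γ.verts ∩ U) (Γ.verts ∩ U)) :
    (Γ.induce U hL hR).Homog := by
  rintro s f hs ⟨hsV, hinj, hfL, hfR, hfE⟩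
  rw [verts_induce] at hsV
  have hfU : MapsTo f s U := fun x hx => (hsV hx).1.elim
    (fun h => (hfL x hx ⟨h, (hsV hx).2⟩).2) (fun h => (hfR x hx ⟨h, (hsV hx).2⟩).2)
  have hf : Γ.IsPartialIso Γ s f :=
    ⟨fun x hx => (hsV hx).1, hinj, fun x hx h => (hfL x hx ⟨h, (hsV hx).2⟩).1,
      fun x hx h => (hfR x hx ⟨h, (hsV hx).2⟩).1, fun x hx y hy => by
        rw [← E_induce_iff (hsV hx).2 (hsV hy).2, ← E_induce_iff (hfU hx) (hfU hy)]
        exact hfE x hx y hy⟩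
  obtain ⟨g, hg, hfg, hgU⟩ := hU s f hs (fun x hx => (hsV hx).2) hfU hf
  refine ⟨g, ⟨verts_induce ▸ hgU, fun x hx => ⟨hg.mapsTo_L hx.1, ?_⟩,
    fun x hx => ⟨hg.mapsTo_R hx.1, ?_⟩, fun x hx y hy => ?_⟩, hfg⟩
  · exact (hgU.mapsTo ⟨L_subset_verts hx.1, hx.2⟩).2
  · exact (hgU.mapsTo ⟨R_subset_verts hx.1, hx.2⟩).2
  · rw [verts_induce] at hx hy
    rw [E_induce_iff hx.2 hy.2, E_induce_iff (hgU.mapsTo hx).2 (hgU.mapsTo hy).2]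
    exact hg.E_iff hx.1 hy.1

lemma Homog.not_isComplete_induce (hH : Γ.Homog) (hNC : ¬ Γ.IsComplete) (hLU : Γ.L ⊆ U) :
    ¬ (Γ.induce U hL hR).IsComplete := fun hc => by
  obtain ⟨r, hr, hrU⟩ := hR
  obtain ⟨ℓ, hℓ, hℓr⟩ := hH.diff_nbr_nonempty hNC hr
  exact hℓr (Γ.symm _ _ (hc ℓ ⟨hℓ, hLU hℓ⟩ r ⟨hr, hrU⟩).1)

lemma Homog.not_isEmptyG_induce (hH : Γ.Homog) (hNE : ¬ Γ.IsEmptyG) (hLU : Γ.L ⊆ U) :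
    ¬ (Γ.induce U hL hR).IsEmptyG := fun he => by
  obtain ⟨r, hr, hrU⟩ := hR
  obtain ⟨ℓ, hℓ⟩ := hH.nbr_nonempty hNE hr
  exact he r ℓ ⟨hℓ, hrU, hLU (nbr_subset_L_s10 hr hℓ)⟩

end induce

open Classical in
noncomputable def extension (Γ : BipGraph V) (p : Finset (V × V)) : V → V :=
  if h : ∃ g, Γ.IsAuto g ∧ ∀ q ∈ p, g q.1 = q.2 then h.choose else id

lemma isAuto_extension (Γ : BipGraph V) (p : Finset (V × V)) : Γ.IsAuto (Γ.extension p) := by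
  unfold extension
  split_ifs with h
  exacts [h.choose_spec.1, Γ.isAuto_id]

lemma extension_apply {p : Finset (V × V)} (h : ∃ g, Γ.IsAuto g ∧ ∀ q ∈ p, g q.1 = q.2)
    {q : V × V} (hq : q ∈ p) : Γ.extension p q.1 = q.2 := by
  rw [extension, dif_pos h]
  exact h.choose_spec.2 q hq

noncomputable def extensionFamily [Nonempty V] (Γ : BipGraph V) (t : Finset V) : Set (V → V) :=
  ⋃ p ∈ (t ×ˢ t).powerset, {Γ.extension p, invFunOn (Γ.extension p) Γ.verts}

lemma countable_extensionFamily [Nonempty V] (Γ : BipGraph V) (t : Finset V) :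
    (Γ.extensionFamily t).Countable :=
  ((t ×ˢ t).powerset.finite_toSet.biUnion fun _ _ => toFinite _).countable

lemma Homog.exists_isAuto_eqOn_bijOn [Nonempty V] (hH : Γ.Homog)
    (hU : ∀ t : Finset V, ↑t ⊆ U → ∀ g ∈ Γ.extensionFamily t, MapsTo g U U)
    (hs : s.Finite) (hsU : s ⊆ U) (hfU : MapsTo f s U) (hf : Γ.IsPartialIso Γ s f) :
    ∃ g, Γ.IsAuto g ∧ EqOn f g s ∧ BijOn g (Γ.verts ∩ U) (Γ.verts ∩ U) := by
  classical
  let p := hs.toFinset.image fun x => (x, f x)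
  let t := hs.toFinset ∪ hs.toFinset.image f
  have hpt : p ∈ (t ×ˢ t).powerset := by
    simp only [p, t, Finset.mem_powerset, Finset.image_subset_iff, Finset.mem_product,
      Finset.mem_union, Finset.mem_image]
    exact fun x hx => ⟨Or.inl hx, Or.inr ⟨x, hx, rfl⟩⟩
  have htU : ↑t ⊆ U := by
    simp only [t, Finset.coe_union, Finset.coe_image, Finite.coe_toFinset]
    exact union_subset hsU (image_subset_iff.mpr hfU)
  have hext : ∃ g, Γ.IsAuto g ∧ ∀ q ∈ p, g q.1 = q.2 := by
    obtain ⟨g, hg, hfg⟩ := hH s f hs hf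
    refine ⟨g, hg, ?_⟩
    simp only [p, Finset.mem_image, Finite.mem_toFinset]
    rintro _ ⟨x, hx, rfl⟩
    exact (hfg hx).symm
  refine ⟨Γ.extension p, Γ.isAuto_extension p,
    fun x hx => (extension_apply hext (q := (x, f x)) (by simp [p, hx])).symm,
    (Γ.isAuto_extension p).bijOn_inter ?_ ?_⟩
  · exact hU t htU _ (mem_biUnion hpt (mem_insert _ _))
  · exact hU t htU _ (mem_biUnion hpt (mem_insert_of_mem _ rfl))

end BipGraph

theorem saS_induced_subgraph {V : Type*} (κ μ' μ : Cardinal)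
    (h1 : κ < μ') (h2 : μ' ≤ μ) (Γ : BipGraph V) (hΓ : Γ.IsSaS κ μ) :
    ∃ Γ' : BipGraph V, Γ'.L = Γ.L ∧ Γ'.R ⊆ Γ.R ∧
      (∀ x ∈ Γ'.verts, ∀ y ∈ Γ'.verts, (Γ'.E x y ↔ Γ.E x y)) ∧
      Γ'.IsSaS κ μ' := by
  obtain ⟨hH, hNC, hNE, rfl, rfl, hLR⟩ := hΓ
  have : Nonempty V := Γ.Lne.to_subtype.map Subtype.val
  have hμ' : ℵ₀ ≤ μ' :=
    (aleph0_le_mk_iff.mpr (hH.infinite_L hNE hNC hLR).to_subtype).trans h1.le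
  obtain ⟨R₀, hR₀R, hR₀⟩ := le_mk_iff_exists_subset.mp h2
  obtain ⟨U, hSU, hU, hUclosed⟩ := exists_superset_mk_le_forall_mapsTo hμ' (S := Γ.L ∪ R₀)
    ((mk_union_le _ _).trans ((add_le_add h1.le hR₀.le).trans (add_eq_self hμ').le))
    Γ.extensionFamily fun t => (Γ.countable_extensionFamily t).le_aleph0.trans hμ'
  have hLU : Γ.L ⊆ U := subset_union_left.trans hSU
  have hR₀U : R₀ ⊆ Γ.R ∩ U := subset_inter hR₀R (subset_union_right.trans hSU)
  have hR₀ne : R₀.Nonempty :=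
    nonempty_coe_sort.mp (mk_ne_zero_iff.mp (hR₀ ▸ (aleph0_pos.trans_le hμ').ne'))
  let Γ' := Γ.induce U (Γ.Lne.mono (subset_inter subset_rfl hLU)) (hR₀ne.mono hR₀U)
  have hΓ'L : Γ'.L = Γ.L := inter_eq_left.mpr hLU
  have hΓ'R : #Γ'.R = μ' :=
    le_antisymm ((mk_le_mk_of_subset inter_subset_right).trans hU) (hR₀ ▸ mk_le_mk_of_subset hR₀U)
  refine ⟨Γ', hΓ'L, inter_subset_left, fun x hx y hy => ?_, ?_, hH.not_isComplete_induce hNC hLU,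
    hH.not_isEmptyG_induce hNE hLU, by rw [hΓ'L], hΓ'R, h1⟩
  · rw [BipGraph.verts_induce] at hx hy
    exact BipGraph.E_induce_iff hx.2 hy.2
  · exact BipGraph.homog_induce fun _ _ hs hsU hfU hf =>
      hH.exists_isAuto_eqOn_bijOn hUclosed hs hsU hfU hf
end

section
/- Let Γ = ⟨ω, R, ∈⟩ be a random bipartite graph, u₀,…,u_k ∈ R, and g₁,…,g_l automorphisms of Γ that are pairwise distinct. Then there is a finite partial function σ : R → {+,−} with domain disjoint from {u₀,…,u_k} such that for every x ∈ B_σ, the values g₁(x),…,g_l(x) are l distinct elements of ω, where B_σ = ⋂_{u ∈ dom σ} u^{σ(u)} with u⁺ = u and u⁻ = ω \ u. -/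
/-- The Boolean combination determined by the finite "pattern" given by positive
part `P` and negative part `N` (a finite partial function to `{+,-}`). -/
def BSigma (P N : Finset (Set ℕ)) : Set ℕ :=
  {x | (∀ A ∈ P, x ∈ A) ∧ (∀ A ∈ N, x ∉ A)}

/-- The bipartite graph `⟨ω, R, ∈⟩` is random. -/
def SetRandom (R : Set (Set ℕ)) : Prop :=
  (∀ X Y : Finset ℕ, Disjoint X Y →
    {A ∈ R | (∀ x ∈ X, x ∈ A) ∧ (∀ y ∈ Y, y ∉ A)}.Infinite) ∧
  (∀ P N : Finset (Set ℕ), ↑P ⊆ R → ↑N ⊆ R → Disjoint P N → (BSigma P N).Infinite)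

/-- A (side-respecting) automorphism of the bipartite graph `⟨ω, R, ∈⟩`:
by extensionality it is determined by a bijection of `ω` whose induced action
`A ↦ g '' A` is a bijection of `R`. -/
def IsSetAuto (R : Set (Set ℕ)) (g : ℕ → ℕ) : Prop :=
  Function.Bijective g ∧ Set.BijOn (fun A => g '' A) R R

/-- `⟨ω, R, ∈⟩` is homogeneous: every finite partial side-respecting
automorphism (given by `p` on finitely many left vertices and `q` on finitely
many right vertices, preserving edges and non-edges) extends to a total
automorphism. -/
def SetHomog (R : Set (Set ℕ)) : Prop :=
  ∀ (s : Finset ℕ) (t : Finset (Set ℕ)), ↑t ⊆ R →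
    ∀ (p : ℕ → ℕ) (q : Set ℕ → Set ℕ),
      Set.InjOn p ↑s → Set.InjOn q ↑t → (∀ A ∈ t, q A ∈ R) →
      (∀ x ∈ s, ∀ A ∈ t, (x ∈ A ↔ p x ∈ q A)) →
      ∃ g : ℕ → ℕ, IsSetAuto R g ∧ (∀ x ∈ s, g x = p x) ∧ (∀ A ∈ t, g '' A = q A)

def SetComplete (R : Set (Set ℕ)) : Prop := ∀ A ∈ R, ∀ x : ℕ, x ∈ A

def SetEmptyG (R : Set (Set ℕ)) : Prop := ∀ A ∈ R, ∀ x : ℕ, x ∉ A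

lemma preim_mem {R : Set (Set ℕ)} {g : ℕ → ℕ} (hg : IsSetAuto R g) {A : Set ℕ}
    (hA : A ∈ R) : g ⁻¹' A ∈ R := by
  obtain ⟨B, hB, hBA⟩ := hg.2.surjOn hA
  have : g ⁻¹' A = B := by
    rw [← hBA]; exact Set.preimage_image_eq _ hg.1.1
  rwa [this]

lemma key (R : Set (Set ℕ)) (hr : SetRandom R) (l : ℕ) (g : Fin l → ℕ → ℕ)
    (hg : ∀ i, IsSetAuto R (g i)) (F : Finset (Set ℕ))
    (T : Finset (Fin l × Fin l)) (hT : ∀ p ∈ T, g p.1 ≠ g p.2) :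
    ∃ P N : Finset (Set ℕ), ↑P ⊆ R ∧ ↑N ⊆ R ∧ Disjoint P N ∧
      (∀ A ∈ P, A ∉ F) ∧ (∀ A ∈ N, A ∉ F) ∧
      ∀ x ∈ BSigma P N, ∀ p ∈ T, g p.1 x ≠ g p.2 x := by
  classical
  induction T using Finset.induction_on with
  | empty => exact ⟨∅, ∅, by simp, by simp, by simp, by simp, by simp, by simp⟩
  | @insert p T hpT ih =>
    obtain ⟨P, N, hPR, hNR, hPN, hPF, hNF, hx⟩ :=
      ih (fun q hq => hT q (Finset.mem_insert_of_mem hq))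
    have hne := hT p (Finset.mem_insert_self _ _)
    obtain ⟨x₀, hx₀⟩ := Function.ne_iff.mp hne
    have hdisj : Disjoint ({g p.1 x₀} : Finset ℕ) {g p.2 x₀} := by
      simp only [Finset.disjoint_singleton]; exact hx₀
    have hinf := hr.1 {g p.1 x₀} {g p.2 x₀} hdisj
    set S : Finset (Set ℕ) := F ∪ P ∪ N with hS
    set Bad : Set (Set ℕ) :=
      (fun B => g p.1 '' B) '' ↑S ∪ (fun B => g p.2 '' B) '' ↑S with hBad
    have hBadfin : Bad.Finite :=
      (S.finite_toSet.image _).union (S.finite_toSet.image _)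
    obtain ⟨A, hA⟩ := (hinf.diff hBadfin).nonempty
    obtain ⟨⟨hAR, hA1, hA2⟩, hAB⟩ := hA
    have hA1' : g p.1 x₀ ∈ A := hA1 _ (Finset.mem_singleton_self _)
    have hA2' : g p.2 x₀ ∉ A := hA2 _ (Finset.mem_singleton_self _)
    set A₁ : Set ℕ := g p.1 ⁻¹' A with hA₁
    set A₂ : Set ℕ := g p.2 ⁻¹' A with hA₂
    have hA₁R : A₁ ∈ R := preim_mem (hg p.1) hAR
    have hA₂R : A₂ ∈ R := preim_mem (hg p.2) hAR
    have hA₁S : A₁ ∉ S := by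
      intro h
      exact hAB (Or.inl ⟨A₁, h, by
        simp only [hA₁, Set.image_preimage_eq _ (hg p.1).1.2]⟩)
    have hA₂S : A₂ ∉ S := by
      intro h
      exact hAB (Or.inr ⟨A₂, h, by
        simp only [hA₂, Set.image_preimage_eq _ (hg p.2).1.2]⟩)
    have hA₁₂ : A₁ ≠ A₂ := by
      intro h
      have : x₀ ∈ A₁ := hA1'
      rw [h] at this
      exact hA2' this
    refine ⟨insert A₁ P, insert A₂ N, ?_, ?_, ?_, ?_, ?_, ?_⟩
    · intro B hB
      rcases Finset.mem_insert.mp hB with h | h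
      · exact h ▸ hA₁R
      · exact hPR h
    · intro B hB
      rcases Finset.mem_insert.mp hB with h | h
      · exact h ▸ hA₂R
      · exact hNR h
    · rw [Finset.disjoint_insert_left]
      constructor
      · rw [Finset.mem_insert]
        push_neg
        exact ⟨hA₁₂, fun h => hA₁S (by simp [hS, h])⟩
      · rw [Finset.disjoint_insert_right]
        exact ⟨fun h => hA₂S (by simp [hS, h]), hPN⟩
    · intro B hB
      rcases Finset.mem_insert.mp hB with h | h
      · exact h ▸ fun hF => hA₁S (by simp [hS, hF])
      · exact hPF B h
    · intro B hB
      rcases Finset.mem_insert.mp hB with h | h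
      · exact h ▸ fun hF => hA₂S (by simp [hS, hF])
      · exact hNF B h
    · intro x hxB q hq
      have hxB' : x ∈ BSigma P N :=
        ⟨fun B hB => hxB.1 B (Finset.mem_insert_of_mem hB),
         fun B hB => hxB.2 B (Finset.mem_insert_of_mem hB)⟩
      rcases Finset.mem_insert.mp hq with h | h
      · subst h
        have h1 : x ∈ A₁ := hxB.1 A₁ (Finset.mem_insert_self _ _)
        have h2 : x ∉ A₂ := hxB.2 A₂ (Finset.mem_insert_self _ _)
        intro heq
        exact h2 (by rwa [hA₂, Set.mem_preimage, ← heq])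
      · exact hx x hxB' q h

theorem autos_pairwise_distinct_on_boolean_combination (R : Set (Set ℕ))
    (hr : SetRandom R)
    (k : ℕ) (u : Fin (k + 1) → Set ℕ) (hu : ∀ i, u i ∈ R)
    (l : ℕ) (g : Fin l → ℕ → ℕ) (hg : ∀ i, IsSetAuto R (g i))
    (hdist : ∀ i j : Fin l, i ≠ j → g i ≠ g j) :
    ∃ P N : Finset (Set ℕ), ↑P ⊆ R ∧ ↑N ⊆ R ∧ Disjoint P N ∧
      (∀ i, u i ∉ P ∧ u i ∉ N) ∧
      ∀ x ∈ BSigma P N, ∀ i j : Fin l, i ≠ j → g i x ≠ g j x := by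
  classical
  obtain ⟨P, N, hPR, hNR, hPN, hPF, hNF, hx⟩ :=
    key R hr l g hg (Finset.image u Finset.univ)
      (Finset.univ.filter (fun p : Fin l × Fin l => p.1 ≠ p.2))
      (fun p hp => hdist p.1 p.2 (by simpa using hp))
  refine ⟨P, N, hPR, hNR, hPN, ?_, ?_⟩
  · intro i
    exact ⟨fun h => hPF _ h (Finset.mem_image_of_mem u (Finset.mem_univ i)),
           fun h => hNF _ h (Finset.mem_image_of_mem u (Finset.mem_univ i))⟩
  · intro x hxB i j hij
    exact hx x hxB (i, j) (by simpa using hij)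
end

section
/- Suppose B is an infinite subset of ω and g₁,…,g_k are injective functions defined on B such that for every x ∈ B and 1 ≤ i < j ≤ k, g_i(x) ≠ g_j(x). Then there is an infinite subset B' ⊆ B such that for all distinct x, y ∈ B' and all 1 ≤ i ≤ j ≤ k, g_i(x) ≠ g_j(y). -/
theorem injective_functions_separating_set (B : Set ℕ) (hB : B.Infinite)
    (k : ℕ) (g : Fin k → ℕ → ℕ)
    (hinj : ∀ i, Set.InjOn (g i) B)
    (hdis : ∀ x ∈ B, ∀ i j : Fin k, i ≠ j → g i x ≠ g j x) :
    ∃ B' ⊆ B, B'.Infinite ∧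
      ∀ x ∈ B', ∀ y ∈ B', x ≠ y → ∀ i j : Fin k, g i x ≠ g j y := by
  classical
  -- the "bad" set attached to a finite set S is finite
  have hfin : ∀ (S : Set ℕ), S.Finite →
      ((S ∪ {x | x ∈ B ∧ ∃ i j : Fin k, ∃ y ∈ S, g i x = g j y}) : Set ℕ).Finite := by
    intro S hS
    refine hS.union ?_
    have hsub : {x | x ∈ B ∧ ∃ i j : Fin k, ∃ y ∈ S, g i x = g j y} ⊆
        ⋃ i : Fin k, ⋃ j : Fin k, ⋃ y ∈ S, {x | x ∈ B ∧ g i x = g j y} := by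
      rintro x ⟨hxB, i, j, y, hy, h⟩
      simp only [Set.mem_iUnion]
      exact ⟨i, j, y, hy, hxB, h⟩
    refine Set.Finite.subset ?_ hsub
    refine Set.finite_iUnion fun i => Set.finite_iUnion fun j =>
      Set.Finite.biUnion hS fun y _ => ?_
    have hss : {x | x ∈ B ∧ g i x = g j y}.Subsingleton := by
      intro a ha b hb
      exact hinj i ha.1 hb.1 (ha.2.trans hb.2.symm)
    exact hss.finite
  -- from any finite set we can pick a fresh separated element of B
  have key : ∀ (S : Set ℕ), S.Finite →
      ∃ x, x ∈ B ∧ x ∉ S ∧ ∀ y ∈ S, ∀ i j : Fin k, g i x ≠ g j y := by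
    intro S hS
    obtain ⟨x, hxB, hxbad⟩ := (hB.diff (hfin S hS)).nonempty
    refine ⟨x, hxB, fun h => hxbad (Or.inl h), fun y hy i j h => ?_⟩
    exact hxbad (Or.inr ⟨hxB, i, j, y, hy, h⟩)
  choose pick hpickB hpicknot hpicksep using key
  -- build the increasing family of finsets
  obtain ⟨F, hF0, hFsucc⟩ : ∃ F : ℕ → Finset ℕ, F 0 = ∅ ∧
      ∀ n, F (n + 1) = insert (pick ((F n : Set ℕ)) (F n).finite_toSet) (F n) :=
    ⟨fun n => Nat.rec ∅ (fun _ S => insert (pick (S : Set ℕ) S.finite_toSet) S) n,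
      rfl, fun n => rfl⟩
  have hFB : ∀ n, ((F n : Set ℕ)) ⊆ B := by
    intro n
    induction n with
    | zero => simp [hF0]
    | succ n ih =>
      rw [hFsucc]
      intro x hx
      rcases Finset.mem_insert.mp hx with h | h
      · rw [h]; exact hpickB _ _
      · exact ih h
  have hFmono : ∀ m n, m ≤ n → F m ⊆ F n := by
    intro m n h
    induction h with
    | refl => exact subset_rfl
    | step h ih => rw [hFsucc]; exact ih.trans (Finset.subset_insert _ _)
  have hgood : ∀ n, ∀ x ∈ F n, ∀ y ∈ F n, x ≠ y → ∀ i j : Fin k, g i x ≠ g j y := by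
    intro n
    induction n with
    | zero => simp [hF0]
    | succ n ih =>
      rw [hFsucc]
      intro x hx y hy hxy i j
      rcases Finset.mem_insert.mp hx with hx | hx <;>
        rcases Finset.mem_insert.mp hy with hy | hy
      · exact absurd (hx.trans hy.symm) hxy
      · rw [hx]; exact hpicksep _ _ y hy i j
      · rw [hy]
        intro h
        exact hpicksep _ (F n).finite_toSet x hx j i h.symm
      · exact ih x hx y hy hxy i j
  -- the separating infinite set
  refine ⟨⋃ n, ((F n : Set ℕ)), ?_, ?_, ?_⟩
  · intro x hx
    obtain ⟨n, hn⟩ := Set.mem_iUnion.mp hx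
    exact hFB n hn
  · refine Set.infinite_of_injective_forall_mem
      (f := fun n => pick ((F n : Set ℕ)) (F n).finite_toSet) ?_ ?_
    · intro m n hmn
      beta_reduce at hmn
      by_contra hne
      rcases Nat.lt_or_ge m n with h | h
      · have : pick ((F m : Set ℕ)) (F m).finite_toSet ∈ F n := by
          have := hFmono (m + 1) n h
          exact this (by rw [hFsucc]; exact Finset.mem_insert_self _ _)
        rw [hmn] at this
        exact hpicknot _ (F n).finite_toSet this
      · have hlt : n < m := lt_of_le_of_ne h (Ne.symm hne)
        have : pick ((F n : Set ℕ)) (F n).finite_toSet ∈ F m := by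
          have := hFmono (n + 1) m hlt
          exact this (by rw [hFsucc]; exact Finset.mem_insert_self _ _)
        rw [← hmn] at this
        exact hpicknot _ (F m).finite_toSet this
    · intro n
      refine Set.mem_iUnion.mpr ⟨n + 1, ?_⟩
      rw [hFsucc]
      exact Finset.mem_insert_self _ _
  · intro x hx y hy hxy i j
    obtain ⟨m, hm⟩ := Set.mem_iUnion.mp hx
    obtain ⟨n, hn⟩ := Set.mem_iUnion.mp hy
    exact hgood (max m n) x (hFmono m _ (le_max_left m n) hm)
      y (hFmono n _ (le_max_right m n) hn) hxy i j
end

section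
/- Let Γ = ⟨ω, R, ∈⟩ be a countable random bipartite graph, τ : R → {+,−} a finite partial function, and G a finite set of automorphisms of Γ. Then there exists an infinite set B ⊆ B_τ such that for all (g, x) ≠ (g', x') in G × B, g(x) ≠ g'(x'), where B_τ = ⋂_{u ∈ dom τ} u^{τ(u)}, u⁺ = u, u⁻ = ω \ u. -/
/-! For each pair `g ≠ g'` in `G`, randomness gives fresh `A, D ∈ R` with `A ≠ D` such that
`g x ≠ g' x` on `A \ D`; adding `A` to `P` and `D` to `N` for all such pairs yields a pattern
whose set `BSigma P' N' ⊆ BSigma P N` is still infinite and on which distinct members of `G`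
disagree pointwise. Since each `g ∈ G` is injective, any `x` satisfies `g x = g' y` for only
finitely many `y`, so a greedy enumeration of `BSigma P' N'` gives the required infinite set. -/

open Set

theorem Set.Infinite.exists_infinite_subset_pairwise {α : Type*} {S : Set α} (hS : S.Infinite)
    {r : α → α → Prop} [Std.Symm r] (hr : ∀ x, {y | ¬ r x y}.Finite) :
    ∃ B ⊆ S, B.Infinite ∧ B.Pairwise r := by
  obtain ⟨u, hu⟩ : ∃ u : ℕ → α, ∀ n, u n ∈ S ∧ ∀ y ∈ u '' Iio n, y ≠ u n ∧ r y (u n) := by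
    refine seq_of_forall_finite_exists (P := fun c t => c ∈ S ∧ ∀ y ∈ t, y ≠ c ∧ r y c)
      fun t ht => ?_
    obtain ⟨c, hcS, hc⟩ := (hS.sdiff (ht.union (ht.biUnion fun y _ => hr y))).nonempty
    simp only [mem_union, mem_iUnion, mem_ofPred_eq, not_or, not_exists, not_not] at hc
    exact ⟨c, hcS, fun y hy => ⟨fun h => hc.1 (h ▸ hy), hc.2 y hy⟩⟩
  have hlt : ∀ ⦃m n⦄, m < n → u m ≠ u n ∧ r (u m) (u n) := fun m n h =>
    (hu n).2 _ ⟨m, h, rfl⟩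
  have hinj : Function.Injective u :=
    Function.injective_iff_pairwise_ne.2 <| (Std.Symm.pairwise_on u).2 fun m n h => (hlt h).1
  exact ⟨range u, range_subset_iff.2 fun n => (hu n).1, infinite_range_of_injective hinj,
    ((Std.Symm.pairwise_on u).2 fun m n h => (hlt h).2).range_pairwise⟩

theorem BSigma_anti {P N P' N' : Finset (Set ℕ)} (hP : P ⊆ P') (hN : N ⊆ N') :
    BSigma P' N' ⊆ BSigma P N :=
  fun _ hx => ⟨fun A hA => hx.1 A (hP hA), fun A hA => hx.2 A (hN hA)⟩

theorem mem_BSigma_insert_insert [DecidableEq (Set ℕ)] {P N : Finset (Set ℕ)} {A D : Set ℕ}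
    {x : ℕ} : x ∈ BSigma (insert A P) (insert D N) ↔ x ∈ A ∧ x ∉ D ∧ x ∈ BSigma P N := by
  simp only [BSigma, mem_ofPred_eq, Finset.forall_mem_insert]
  tauto

namespace IsSetAuto

variable {R : Set (Set ℕ)} {g g' : ℕ → ℕ}

theorem preimage_image_mem (hg : IsSetAuto R g) (hg' : IsSetAuto R g') {A : Set ℕ}
    (hA : A ∈ R) : g' ⁻¹' (g '' A) ∈ R := by
  obtain ⟨D, hD, hgD⟩ := hg'.2.surjOn (hg.2.mapsTo hA)
  rwa [← hgD, preimage_image_eq _ hg'.1.1]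

/-- The witnesses are `A` and `D = g'⁻¹(g A)`: if `x ∈ A` and `g x = g' x`, then `x ∈ D`.
Taking `n ∈ A` with `g n ≠ g' n` and `w = g'⁻¹(g n) ∉ A` forces `A ≠ D`. -/
theorem exists_mem_notMem_imp_apply_ne (hr : SetRandom R) (hg : IsSetAuto R g)
    (hg' : IsSetAuto R g') (hne : g ≠ g') (T : Finset (Set ℕ)) :
    ∃ A ∈ R, ∃ D ∈ R, A ∉ T ∧ D ∉ T ∧ A ≠ D ∧ ∀ x ∈ A, x ∉ D → g x ≠ g' x := by
  classical
  set D : Set ℕ → Set ℕ := fun A => g' ⁻¹' (g '' A)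
  obtain ⟨n, hn⟩ := Function.ne_iff.mp hne
  obtain ⟨w, hw⟩ := hg'.1.2 (g n)
  have hnw : n ≠ w := by
    rintro rfl
    exact hn hw.symm
  have hD : Function.Injective D :=
    (preimage_injective.2 hg'.1.2).comp (image_injective.2 hg.1.1)
  have hbad : (↑T ∪ D ⁻¹' ↑T : Set (Set ℕ)).Finite :=
    T.finite_toSet.union (T.finite_toSet.preimage hD.injOn)
  obtain ⟨A, ⟨hAR, hnA, hwA⟩, hAT⟩ := ((hr.1 {n} {w} (by simpa using hnw)).sdiff hbad).nonempty
  simp only [Finset.mem_singleton, forall_eq, mem_union, Finset.mem_coe, mem_preimage,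
    not_or] at hnA hwA hAT
  refine ⟨A, hAR, D A, hg.preimage_image_mem hg' hAR, hAT.1, hAT.2, fun h => hwA ?_,
    fun x hx hxD hgx => hxD ⟨x, hx, hgx⟩⟩
  rw [h]
  exact ⟨n, hnA, hw.symm⟩

end IsSetAuto

theorem exists_superset_forall_apply_ne {R : Set (Set ℕ)} (hr : SetRandom R)
    (Q : Finset ((ℕ → ℕ) × (ℕ → ℕ)))
    (hQ : ∀ p ∈ Q, IsSetAuto R p.1 ∧ IsSetAuto R p.2 ∧ p.1 ≠ p.2)
    {P N : Finset (Set ℕ)} (hP : ↑P ⊆ R) (hN : ↑N ⊆ R) (hPN : Disjoint P N) :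
    ∃ P' N' : Finset (Set ℕ), ↑P' ⊆ R ∧ ↑N' ⊆ R ∧ Disjoint P' N' ∧
      P ⊆ P' ∧ N ⊆ N' ∧ ∀ x ∈ BSigma P' N', ∀ p ∈ Q, p.1 x ≠ p.2 x := by
  classical
  induction Q using Finset.induction_on with
  | empty => exact ⟨P, N, hP, hN, hPN, subset_rfl, subset_rfl, by simp⟩
  | @insert q Q hq ih =>
    obtain ⟨P', N', hP', hN', hPN', hPP', hNN', hQ'⟩ :=
      ih fun p hp => hQ p (Finset.mem_insert_of_mem hp)
    obtain ⟨hq₁, hq₂, hq⟩ := hQ q (Finset.mem_insert_self q Q)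
    obtain ⟨A, hAR, D, hDR, hAT, hDT, hAD, hAD'⟩ :=
      hq₁.exists_mem_notMem_imp_apply_ne hr hq₂ hq (P' ∪ N')
    simp only [Finset.mem_union, not_or] at hAT hDT
    refine ⟨insert A P', insert D N', ?_, ?_, ?_, hPP'.trans (Finset.subset_insert _ _),
      hNN'.trans (Finset.subset_insert _ _), ?_⟩
    · simpa [insert_subset_iff] using ⟨hAR, hP'⟩
    · simpa [insert_subset_iff] using ⟨hDR, hN'⟩
    · simpa [hAD.symm, hAT.2, hDT.1] using hPN'
    · intro x hx p hp
      obtain ⟨hxA, hxD, hx⟩ := mem_BSigma_insert_insert.1 hx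
      obtain rfl | hp := Finset.mem_insert.1 hp
      exacts [hAD' x hxA hxD, hQ' x hx p hp]

theorem finite_autos_injective_evaluation_general (R : Set (Set ℕ))
    (hr : SetRandom R)
    (P N : Finset (Set ℕ)) (hP : ↑P ⊆ R) (hN : ↑N ⊆ R) (hPN : Disjoint P N)
    (G : Finset (ℕ → ℕ)) (hG : ∀ g ∈ G, IsSetAuto R g) :
    ∃ B ⊆ BSigma P N, B.Infinite ∧
      ∀ g ∈ G, ∀ g' ∈ G, ∀ x ∈ B, ∀ x' ∈ B,
        (g, x) ≠ (g', x') → g x ≠ g' x' := by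
  classical
  obtain ⟨P', N', hP', hN', hPN', hPP', hNN', hsep⟩ :=
    exists_superset_forall_apply_ne hr G.offDiag (fun p hp => by
      obtain ⟨h₁, h₂, h₁₂⟩ := Finset.mem_offDiag.1 hp
      exact ⟨hG _ h₁, hG _ h₂, h₁₂⟩) hP hN hPN
  let compat (x y : ℕ) : Prop := ∀ g ∈ G, ∀ g' ∈ G, g x ≠ g' y
  have : Std.Symm compat := ⟨fun x y h g hg g' hg' => (h g' hg' g hg).symm⟩
  have hcompat (x : ℕ) : {y | ¬ compat x y}.Finite := by
    refine (G.finite_toSet.biUnion fun g _ => G.finite_toSet.biUnion fun g' hg' =>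
      (finite_singleton (g x)).preimage (hG g' hg').1.1.injOn).subset fun y hy => ?_
    simpa [compat, eq_comm] using hy
  obtain ⟨B, hBS, hB, hBcompat⟩ :=
    (hr.2 P' N' hP' hN' hPN').exists_infinite_subset_pairwise hcompat
  refine ⟨B, hBS.trans (BSigma_anti hPP' hNN'), hB, ?_⟩
  rintro g hg g' hg' x hx x' hx' hne
  obtain rfl | hxx' := eq_or_ne x x'
  · exact hsep x (hBS hx) (g, g') (Finset.mem_offDiag.2 ⟨hg, hg', fun h => hne (congrArg (·, x) h)⟩)
  · exact hBcompat hx hx' hxx' g hg g' hg'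

theorem finite_autos_injective_evaluation (R : Set (Set ℕ))
    (hc : R.Countable) (hr : SetRandom R)
    (P N : Finset (Set ℕ)) (hP : ↑P ⊆ R) (hN : ↑N ⊆ R) (hPN : Disjoint P N)
    (G : Finset (ℕ → ℕ)) (hG : ∀ g ∈ G, IsSetAuto R g) :
    ∃ B ⊆ BSigma P N, B.Infinite ∧
      ∀ g ∈ G, ∀ g' ∈ G, ∀ x ∈ B, ∀ x' ∈ B,
        (g, x) ≠ (g', x') → g x ≠ g' x' :=
  finite_autos_injective_evaluation_general R hr P N hP hN hPN G hG
end

section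
/- Let Γ = ⟨ω, R, ∈⟩ be a countable random bipartite graph and G a countable group of automorphisms of Γ. Then there exist two countable random bipartite graphs Γ⁰ = ⟨ω, R⁰, ∈⟩ and Γ¹ = ⟨ω, R¹, ∈⟩ properly extending Γ (R ⊊ R⁰, R ⊊ R¹) such that every element of G extends to an automorphism structure on each Γⁱ (i.e., R⁰ and R¹ are closed under the induced action of G), and Γ⁰ and Γ¹ are incompatible: there is no random bipartite graph ⟨ω, R', ∈⟩ with R⁰ ∪ R¹ ⊆ R'. -/
/-!
A nontrivial permutation `σ` preserving `R` moves some point `z`, and randomness gives infinitely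
many `B ∈ R` with `z ∈ B`, `σ z ∉ B`; adding `B` positively and `σ[B]` negatively to a Boolean
combination of members of `R` leaves only points moved by `σ`. So for disjoint finite
`gs, hs ⊆ G` every such combination contains infinitely many `x` with `g⁻¹ x ≠ h⁻¹ x` for all
`g ∈ gs`, `h ∈ hs`, and any of them can be used to promise `g⁻¹ x ∈ S` and `h⁻¹ x ∉ S`
consistently with finitely many earlier promises. A directed set of finite colourings meeting the
countably many resulting dense sets (Rasiowa–Sikorski) yields `S` with `R ∪ G(S)` random; since
`g[Sᶜ] = g[S]ᶜ`, so is `R ∪ G(Sᶜ)`, and no random graph contains both `S` and `Sᶜ`.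
-/

open Set Equiv

theorem Set.countable_setOf_finset_subset {α : Type*} {s : Set α} (hs : s.Countable) :
    {t : Finset α | ↑t ⊆ s}.Countable := by
  refine ((countable_ofPred_finite_subset hs).preimage Finset.coe_injective).mono fun t ht => ?_
  exact ⟨t.finite_toSet, ht⟩

def IsPattern (R : Set (Set ℕ)) (P N : Finset (Set ℕ)) : Prop :=
  ↑P ⊆ R ∧ ↑N ⊆ R ∧ Disjoint P N

theorem IsPattern.insert_insert {R : Set (Set ℕ)} {P N : Finset (Set ℕ)} {A B : Set ℕ}
    (h : IsPattern R P N) (hA : A ∈ R) (hB : B ∈ R) (hAB : A ≠ B) (hAN : A ∉ N)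
    (hBP : B ∉ P) : IsPattern R (insert A P) (insert B N) := by
  classical
  refine ⟨?_, ?_, ?_⟩
  · rw [Finset.coe_insert]; exact insert_subset hA h.1
  · rw [Finset.coe_insert]; exact insert_subset hB h.2.1
  · simp only [Finset.disjoint_insert_left, Finset.disjoint_insert_right, Finset.mem_insert,
      not_or]
    exact ⟨⟨hAB.symm, hBP⟩, hAN, h.2.2⟩

theorem BSigma_insert_insert (P N : Finset (Set ℕ)) (A B : Set ℕ) :
    BSigma (insert A P) (insert B N) = BSigma P N ∩ (A \ B) := by
  ext x
  simp only [BSigma, Finset.forall_mem_insert, mem_ofPred_eq, mem_inter_iff, mem_sdiff]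
  tauto

section Random

variable {R : Set (Set ℕ)}

theorem SetRandom.infinite_bSigma (hr : SetRandom R) {P N : Finset (Set ℕ)}
    (h : IsPattern R P N) : (BSigma P N).Infinite :=
  hr.2 P N h.1 h.2.1 h.2.2

theorem SetRandom.infinite_setOf_mem_notMem (hr : SetRandom R) {x y : ℕ} (hxy : x ≠ y) :
    {B | B ∈ R ∧ x ∈ B ∧ y ∉ B}.Infinite :=
  (hr.1 {x} {y} (by simpa using hxy)).mono fun B hB => by simpa using hB

theorem SetRandom.infinite_setOf_image_ne (hr : SetRandom R) {σ : Perm ℕ} (hσ : σ ≠ 1) :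
    {B | B ∈ R ∧ ⇑σ '' B ≠ B}.Infinite := by
  obtain ⟨z, hz⟩ : ∃ z, σ z ≠ z := by
    by_contra! h
    exact hσ (Equiv.ext h)
  refine (hr.infinite_setOf_mem_notMem hz.symm).mono ?_
  rintro B ⟨hB, hzB, hσzB⟩
  exact ⟨hB, fun h => hσzB (h ▸ mem_image_of_mem σ hzB)⟩

theorem SetRandom.infinite_bSigma_inter_moved (hr : SetRandom R) {T : Finset (Perm ℕ)}
    (hTR : ∀ σ ∈ T, MapsTo (fun A => ⇑σ '' A) R R) (hT : 1 ∉ T) {P N : Finset (Set ℕ)}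
    (hPN : IsPattern R P N) : (BSigma P N ∩ {x | ∀ σ ∈ T, σ x ≠ x}).Infinite := by
  classical
  induction T using Finset.induction_on generalizing P N with
  | empty => simpa using hr.infinite_bSigma hPN
  | insert σ T _ ih =>
    rw [Finset.forall_mem_insert] at hTR
    have hσ : σ ≠ 1 := fun h => hT (h ▸ Finset.mem_insert_self _ _)
    have hbad : (↑N ∪ (fun A => ⇑σ '' A) ⁻¹' ↑P : Set (Set ℕ)).Finite :=
      N.finite_toSet.union (P.finite_toSet.preimage (image_injective.2 σ.injective).injOn)
    obtain ⟨B, ⟨hB, hσB⟩, hBbad⟩ := ((hr.infinite_setOf_image_ne hσ).sdiff hbad).nonempty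
    simp only [mem_union, Finset.mem_coe, mem_preimage, not_or] at hBbad
    have hPN' := hPN.insert_insert hB (hTR.1 hB) hσB.symm hBbad.1 hBbad.2
    refine (ih hTR.2 (fun h => hT (Finset.mem_insert_of_mem h)) hPN').mono ?_
    rintro x ⟨hx, hxT⟩
    rw [BSigma_insert_insert] at hx
    refine ⟨hx.1, Finset.forall_mem_insert _ _ _ |>.2 ⟨fun h => hx.2.2 ?_, hxT⟩⟩
    exact h ▸ mem_image_of_mem σ hx.2.1

theorem SetRandom.compl_notMem (hr : SetRandom R) {S : Set ℕ} (hS : S ∈ R) : Sᶜ ∉ R := by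
  intro hSc
  have h := hr.2 {S, Sᶜ} ∅ (by simp [insert_subset_iff, hS, hSc]) (by simp) (by simp)
  obtain ⟨x, hx⟩ := h.nonempty
  exact hx.1 Sᶜ (by simp) (hx.1 S (by simp))

end Random

/-- Forcing conditions: finitely many points promised to `S` and finitely many to `Sᶜ`. -/
abbrev FinColoring : Type := {c : Finset ℕ × Finset ℕ // Disjoint c.1 c.2}

namespace FinColoring

theorem le_iff {c d : FinColoring} : c ≤ d ↔ c.1.1 ⊆ d.1.1 ∧ c.1.2 ⊆ d.1.2 := Iff.rfl

def limit (I : Set FinColoring) : Set ℕ := {y | ∃ c ∈ I, y ∈ c.1.1}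

theorem mem_limit {I : Set FinColoring} {c : FinColoring} (hc : c ∈ I) {a : ℕ}
    (ha : a ∈ c.1.1) : a ∈ limit I :=
  ⟨c, hc, ha⟩

theorem notMem_limit {I : Set FinColoring} (hI : DirectedOn (· ≤ ·) I) {c : FinColoring}
    (hc : c ∈ I) {b : ℕ} (hb : b ∈ c.1.2) : b ∉ limit I := by
  rintro ⟨c', hc', hb'⟩
  obtain ⟨d, -, hcd, hc'd⟩ := hI c hc c' hc'
  exact Finset.disjoint_left.1 d.2 ((le_iff.1 hc'd).1 hb') ((le_iff.1 hcd).2 hb)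

end FinColoring

section Generic

variable {R : Set (Set ℕ)} {G : Subgroup (Perm ℕ)}

variable (R G) in
def IsAdmissible (Q M : Finset (Set ℕ)) (gs hs : Finset (Perm ℕ)) : Prop :=
  IsPattern R Q M ∧ ↑gs ⊆ (G : Set (Perm ℕ)) ∧ ↑hs ⊆ (G : Set (Perm ℕ)) ∧ Disjoint gs hs

theorem countable_setOf_isAdmissible (hc : R.Countable) (hGc : (G : Set (Perm ℕ)).Countable) :
    {T : (Finset (Set ℕ) × Finset (Set ℕ)) × (Finset (Perm ℕ) × Finset (Perm ℕ)) |
      IsAdmissible R G T.1.1 T.1.2 T.2.1 T.2.2}.Countable := by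
  refine (((countable_setOf_finset_subset hc).prod (countable_setOf_finset_subset hc)).prod
    ((countable_setOf_finset_subset hGc).prod (countable_setOf_finset_subset hGc))).mono ?_
  rintro T ⟨⟨hQ, hM, -⟩, hgs, hhs, -⟩
  exact ⟨⟨hQ, hM⟩, hgs, hhs⟩

/-- The Boolean-combination half of `SetRandom (R ∪ G(X))`, with `g ≠ h` in place of
`g[X] ≠ h[X]`. -/
def IsGeneric (R : Set (Set ℕ)) (G : Subgroup (Perm ℕ)) (X : Set ℕ) : Prop :=
  ∀ Q M gs hs, IsAdmissible R G Q M gs hs →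
    (BSigma Q M ∩ {x | (∀ g ∈ gs, x ∈ ⇑g '' X) ∧ ∀ h ∈ hs, x ∉ ⇑h '' X}).Infinite

theorem FinColoring.exists_le_of_isAdmissible (hr : SetRandom R)
    (hG : ∀ g ∈ G, MapsTo (fun A => ⇑g '' A) R R) {Q M : Finset (Set ℕ)}
    {gs hs : Finset (Perm ℕ)} (hadm : IsAdmissible R G Q M gs hs) (c : FinColoring) (n : ℕ) :
    ∃ d : FinColoring, c ≤ d ∧ ∃ x, n < x ∧ x ∈ BSigma Q M ∧
      (∀ g ∈ gs, g⁻¹ x ∈ d.1.1) ∧ ∀ h ∈ hs, h⁻¹ x ∈ d.1.2 := by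
  classical
  obtain ⟨hQM, hgs, hhs, hdisj⟩ := hadm
  set T := Finset.image₂ (fun g h => h * g⁻¹) gs hs
  have hTG : ∀ σ ∈ T, MapsTo (fun A => ⇑σ '' A) R R := by
    simp only [T, Finset.mem_image₂]
    rintro _ ⟨g, hg, h, hh, rfl⟩
    exact hG _ (mul_mem (hhs hh) (inv_mem (hgs hg)))
  have hT : 1 ∉ T := by
    simp only [T, Finset.mem_image₂, mul_inv_eq_one, not_exists, not_and]
    rintro g hg h hh rfl
    exact Finset.disjoint_left.1 hdisj hg hh
  let F : Finset ℕ := Finset.range (n + 1) ∪ gs.biUnion (fun g => c.1.2.image g) ∪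
    hs.biUnion (fun h => c.1.1.image h)
  obtain ⟨x, ⟨hxQM, hxT⟩, hxF⟩ :=
    (hr.infinite_bSigma_inter_moved hTG hT hQM).exists_notMem_finset F
  simp only [F, Finset.mem_union, Finset.mem_range, Finset.mem_biUnion, Finset.mem_image,
    not_or, not_exists, not_and] at hxF
  obtain ⟨⟨hxn, hxneg⟩, hxpos⟩ := hxF
  refine ⟨⟨(c.1.1 ∪ gs.image (fun g => g⁻¹ x), c.1.2 ∪ hs.image (fun h => h⁻¹ x)), ?_⟩,
    ⟨Finset.subset_union_left, Finset.subset_union_left⟩, x, by omega, hxQM,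
    fun g hg => Finset.mem_union_right _ (Finset.mem_image_of_mem _ hg),
    fun h hh => Finset.mem_union_right _ (Finset.mem_image_of_mem _ hh)⟩
  simp only [Finset.disjoint_union_left, Finset.disjoint_union_right]
  refine ⟨⟨c.2, Finset.disjoint_left.2 ?_⟩, Finset.disjoint_left.2 ?_, Finset.disjoint_left.2 ?_⟩
  · rintro _ hag hb
    obtain ⟨g, hg, rfl⟩ := Finset.mem_image.1 hag
    exact hxneg g hg _ hb (by simp)
  · rintro a ha hah
    obtain ⟨h, hh, rfl⟩ := Finset.mem_image.1 hah
    exact hxpos h hh _ ha (by simp)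
  · rintro _ hag hah
    obtain ⟨g, hg, rfl⟩ := Finset.mem_image.1 hag
    obtain ⟨h, hh, he⟩ := Finset.mem_image.1 hah
    exact hxT _ (Finset.mem_image₂_of_mem hg hh) (by rw [Perm.mul_apply, ← he]; simp)

theorem exists_isGeneric (hc : R.Countable) (hr : SetRandom R)
    (hGc : (G : Set (Perm ℕ)).Countable) (hG : ∀ g ∈ G, MapsTo (fun A => ⇑g '' A) R R) :
    ∃ S, IsGeneric R G S := by
  let ι := ↥{T : (Finset (Set ℕ) × Finset (Set ℕ)) × (Finset (Perm ℕ) × Finset (Perm ℕ)) |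
    IsAdmissible R G T.1.1 T.1.2 T.2.1 T.2.2} × ℕ
  have := (countable_setOf_isAdmissible hc hGc).to_subtype
  let _ : Encodable ι := Encodable.ofCountable ι
  let D : ι → Order.Cofinal FinColoring := fun i =>
    { carrier := {d | ∃ x, i.2 < x ∧ x ∈ BSigma i.1.1.1.1 i.1.1.1.2 ∧
        (∀ g ∈ i.1.1.2.1, g⁻¹ x ∈ d.1.1) ∧ ∀ h ∈ i.1.1.2.2, h⁻¹ x ∈ d.1.2}
      isCofinal := fun c => by
        obtain ⟨d, hcd, hd⟩ := FinColoring.exists_le_of_isAdmissible hr hG i.1.2 c i.2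
        exact ⟨d, hd, hcd⟩ }
  let I := Order.idealOfCofinals (⟨(∅, ∅), Finset.disjoint_empty_left _⟩ : FinColoring) D
  refine ⟨FinColoring.limit I, fun Q M gs hs hadm => infinite_of_forall_exists_gt fun n => ?_⟩
  obtain ⟨d, ⟨x, hnx, hx, hgs, hhs⟩, hdI⟩ :=
    Order.cofinal_meets_idealOfCofinals _ D (⟨((Q, M), (gs, hs)), hadm⟩, n)
  refine ⟨x, ⟨hx, fun g hg => ⟨g⁻¹ x, FinColoring.mem_limit hdI (hgs g hg), by simp⟩,
    fun h hh hxh => FinColoring.notMem_limit I.directed hdI (hhs h hh) ?_⟩, hnx⟩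
  rwa [mem_image_equiv] at hxh

theorem IsGeneric.compl {X : Set ℕ} (hX : IsGeneric R G X) : IsGeneric R G Xᶜ := by
  intro Q M gs hs ⟨hQM, hgs, hhs, hdisj⟩
  refine (hX Q M hs gs ⟨hQM, hhs, hgs, hdisj.symm⟩).mono ?_
  rintro x ⟨hx, hxh, hxg⟩
  simp only [image_compl_eq (Equiv.bijective _), mem_compl_iff, not_not]
  exact ⟨hx, hxg, hxh⟩

theorem IsGeneric.notMem {X : Set ℕ} (hX : IsGeneric R G X) : X ∉ R := by
  intro hXR
  have hadm : IsAdmissible R G ∅ {X} {1} ∅ := ⟨⟨by simp, by simpa using hXR, by simp⟩,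
    by simp [one_mem], by simp, by simp⟩
  obtain ⟨x, hx, hxX, -⟩ := (hX _ _ _ _ hadm).nonempty
  exact hx.2 X (Finset.mem_singleton_self X) (by simpa using hxX 1 (Finset.mem_singleton_self 1))

end Generic

section AdjoinOrbit

variable {R : Set (Set ℕ)} {G : Subgroup (Perm ℕ)}

variable (R G) in
/-- `R ∪ G(X)`, where `G(X) = {g[X] | g ∈ G}`. -/
def adjoinOrbit (X : Set ℕ) : Set (Set ℕ) := R ∪ (fun g : Perm ℕ => ⇑g '' X) '' G

theorem mem_adjoinOrbit_self (X : Set ℕ) : X ∈ adjoinOrbit R G X :=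
  Or.inr ⟨1, one_mem G, image_id X⟩

theorem bijOn_image_of_mapsTo {𝒜 : Set (Set ℕ)}
    (h𝒜 : ∀ g ∈ G, MapsTo (fun A => ⇑g '' A) 𝒜 𝒜) {g : Perm ℕ} (hg : g ∈ G) :
    BijOn (fun A => ⇑g '' A) 𝒜 𝒜 := by
  refine ⟨h𝒜 g hg, (image_injective.2 g.injective).injOn, fun A hA => ?_⟩
  exact ⟨⇑g⁻¹ '' A, h𝒜 _ (inv_mem hg) hA, by simp [image_image]⟩

theorem mapsTo_adjoinOrbit (hG : ∀ g ∈ G, MapsTo (fun A => ⇑g '' A) R R) (X : Set ℕ) :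
    ∀ g ∈ G, MapsTo (fun A => ⇑g '' A) (adjoinOrbit R G X) (adjoinOrbit R G X) := by
  rintro g hg A (hA | ⟨k, hk, rfl⟩)
  · exact Or.inl (hG g hg hA)
  · exact Or.inr ⟨g * k, mul_mem hg hk, by simp [image_image]⟩

theorem countable_adjoinOrbit (hc : R.Countable) (hGc : (G : Set (Perm ℕ)).Countable)
    (X : Set ℕ) : (adjoinOrbit R G X).Countable :=
  hc.union (hGc.image _)

theorem exists_finset_of_subset_adjoinOrbit {X : Set ℕ} {P : Finset (Set ℕ)}
    (hP : ↑P ⊆ adjoinOrbit R G X) :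
    ∃ gs : Finset (Perm ℕ), ↑gs ⊆ (G : Set (Perm ℕ)) ∧ (∀ g ∈ gs, ⇑g '' X ∈ P) ∧
      ∀ A ∈ P, A ∉ R → ∃ g ∈ gs, ⇑g '' X = A := by
  classical
  obtain ⟨gs, hgsG, hgs⟩ := Finset.subset_set_image_iff.1 fun A (hA : A ∈ P.filter (· ∉ R)) =>
    (hP (Finset.mem_filter.1 hA).1).resolve_left (Finset.mem_filter.1 hA).2
  refine ⟨gs, hgsG, fun g hg => ?_, fun A hA hAR => ?_⟩
  · exact (Finset.mem_filter.1 (hgs ▸ Finset.mem_image_of_mem _ hg)).1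
  · exact Finset.mem_image.1 (hgs ▸ Finset.mem_filter.2 ⟨hA, hAR⟩)

theorem IsGeneric.ne_adjoinOrbit {X : Set ℕ} (hX : IsGeneric R G X) : R ≠ adjoinOrbit R G X :=
  fun h => hX.notMem (h ▸ mem_adjoinOrbit_self X)

theorem IsGeneric.setRandom_adjoinOrbit (hr : SetRandom R) {X : Set ℕ}
    (hX : IsGeneric R G X) : SetRandom (adjoinOrbit R G X) := by
  classical
  refine ⟨fun Y Z hYZ => (hr.1 Y Z hYZ).mono fun A hA => ⟨Or.inl hA.1, hA.2⟩,
    fun P N hP hN hPN => ?_⟩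
  obtain ⟨gs, hgsG, hgsP, hPgs⟩ := exists_finset_of_subset_adjoinOrbit hP
  obtain ⟨hs, hhsG, hhsN, hNhs⟩ := exists_finset_of_subset_adjoinOrbit hN
  have hdisj : Disjoint gs hs := Finset.disjoint_left.2 fun g hg hg' =>
    Finset.disjoint_left.1 hPN (hgsP g hg) (hhsN g hg')
  have hadm : IsAdmissible R G (P.filter (· ∈ R)) (N.filter (· ∈ R)) gs hs :=
    ⟨⟨fun A hA => (Finset.mem_filter.1 hA).2, fun A hA => (Finset.mem_filter.1 hA).2,
      Finset.disjoint_filter_filter hPN⟩, hgsG, hhsG, hdisj⟩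
  refine (hX _ _ _ _ hadm).mono ?_
  rintro x ⟨⟨hxP, hxN⟩, hxg, hxh⟩
  refine ⟨fun A hA => ?_, fun A hA => ?_⟩
  · by_cases hAR : A ∈ R
    · exact hxP A (Finset.mem_filter.2 ⟨hA, hAR⟩)
    · obtain ⟨g, hg, rfl⟩ := hPgs A hA hAR
      exact hxg g hg
  · by_cases hAR : A ∈ R
    · exact hxN A (Finset.mem_filter.2 ⟨hA, hAR⟩)
    · obtain ⟨h, hh, rfl⟩ := hNhs A hA hAR
      exact hxh h hh

end AdjoinOrbit

theorem incompatible_random_extensions (R : Set (Set ℕ))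
    (hc : R.Countable) (hr : SetRandom R)
    (G : Subgroup (Equiv.Perm ℕ)) (hGc : Set.Countable (G : Set (Equiv.Perm ℕ)))
    (hGaut : ∀ g ∈ G, Set.BijOn (fun A => ⇑g '' A) R R) :
    ∃ R0 R1 : Set (Set ℕ),
      R ⊆ R0 ∧ R ≠ R0 ∧ R ⊆ R1 ∧ R ≠ R1 ∧
      R0.Countable ∧ R1.Countable ∧ SetRandom R0 ∧ SetRandom R1 ∧
      (∀ g ∈ G, Set.BijOn (fun A => ⇑g '' A) R0 R0) ∧
      (∀ g ∈ G, Set.BijOn (fun A => ⇑g '' A) R1 R1) ∧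
      ¬ ∃ R' : Set (Set ℕ), SetRandom R' ∧ R0 ∪ R1 ⊆ R' := by
  have hG : ∀ g ∈ G, MapsTo (fun A => ⇑g '' A) R R := fun g hg => (hGaut g hg).mapsTo
  obtain ⟨S, hS⟩ := exists_isGeneric hc hr hGc hG
  have hSc := hS.compl
  refine ⟨adjoinOrbit R G S, adjoinOrbit R G Sᶜ, subset_union_left, hS.ne_adjoinOrbit,
    subset_union_left, hSc.ne_adjoinOrbit, countable_adjoinOrbit hc hGc S,
    countable_adjoinOrbit hc hGc Sᶜ, hS.setRandom_adjoinOrbit hr, hSc.setRandom_adjoinOrbit hr,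
    fun _ => bijOn_image_of_mapsTo (mapsTo_adjoinOrbit hG S),
    fun _ => bijOn_image_of_mapsTo (mapsTo_adjoinOrbit hG Sᶜ), ?_⟩
  rintro ⟨R', hR', hR01⟩
  exact hR'.compl_notMem (hR01 (Or.inl (mem_adjoinOrbit_self S)))
    (hR01 (Or.inr (mem_adjoinOrbit_self Sᶜ)))
end

section
/- Let Γ and Γ' be (ℵ₀, κ) saS graphs with left side ω, with partitions R = ⋃_{i<κ} R_i and R' = ⋃_{i<κ} R'_i of their right sides into countable pieces such that each induced subgraph ⟨ω, R_i⟩ and ⟨ω, R'_i⟩ is random. Then the partial order P of finite partial isomorphisms p from Γ to Γ' satisfying p(x) ∈ R'_i for all x ∈ dom(p) ∩ R_i, ordered by inclusion, satisfies the countable chain condition. -/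
namespace BipGraph

/-- The induced subgraph `⟨L, S⟩` of `Γ` (for `S ⊆ Γ.R`) is a random bipartite
graph. -/
def RandOn {V : Type*} (Γ : BipGraph V) (S : Set V) : Prop :=
  (∀ X Y : Finset V, ↑X ⊆ Γ.L → ↑Y ⊆ Γ.L → Disjoint X Y →
    {a ∈ S | (∀ x ∈ X, Γ.E x a) ∧ (∀ y ∈ Y, ¬ Γ.E y a)}.Infinite) ∧
  (∀ X Y : Finset V, ↑X ⊆ S → ↑Y ⊆ S → Disjoint X Y →
    {x ∈ Γ.L | (∀ a ∈ X, Γ.E a x) ∧ (∀ b ∈ Y, ¬ Γ.E b x)}.Infinite)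

end BipGraph

/-- A condition in the forcing `P_{Γ,Γ'}`: a finite partial isomorphism from
`Γ` to `Γ'` respecting the partitions of the right sides given by the indexing
functions `idx`, `idx'`. -/
def PCond {V W I : Type*} (Γ : BipGraph V) (Γ' : BipGraph W)
    (idx : V → I) (idx' : W → I) (p : Finset V × (V → W)) : Prop :=
  Γ.IsPartialIso Γ' ↑p.1 p.2 ∧ ∀ a ∈ p.1, a ∈ Γ.R → idx' (p.2 a) = idx a

/-- The extension order on conditions. -/
def PLe {V W : Type*} (p q : Finset V × (V → W)) : Prop :=
  p.1 ⊆ q.1 ∧ ∀ x ∈ p.1, q.2 x = p.2 x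

/-!
Given uncountably many conditions, the Δ-system lemma applied to the finite sets of pieces met
by their domains yields uncountably many whose sets of pieces pairwise meet in a fixed root `ρ`.
On the left side together with the pieces indexed by `ρ`, each of them is a finite partial map
between countable sets (left sides and pieces are countable, and pieces map into the
corresponding pieces), so two distinct ones have the same restriction there. These two are
compatible: outside that part their domains consist of right vertices lying in disjoint sets of
pieces, so their union stays injective, and between right vertices there are no edges to respect.
-/
open Set

section DeltaSystem

variable {α β X : Type*}

theorem exists_not_countable_fiber {A : Set α} (hA : ¬ A.Countable) {f : α → β} {D : Set β}
    (hD : D.Countable) (hf : MapsTo f A D) : ∃ d, ¬ {a ∈ A | f a = d}.Countable := by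
  by_contra! h
  refine hA ((hD.biUnion fun d _ => h d).mono fun a ha => ?_)
  exact mem_biUnion (hf ha) ⟨ha, rfl⟩

theorem exists_not_countable_pairwiseDisjoint (F : α → Finset X) {B : Set α}
    (hB : ¬ B.Countable) (hF : ∀ x, {p ∈ B | x ∈ F p}.Countable) :
    ∃ C ⊆ B, ¬ C.Countable ∧ C.PairwiseDisjoint F := by
  obtain ⟨M, hM⟩ := zorn_subset {M | M ⊆ B ∧ M.PairwiseDisjoint F} fun c hc hchain =>
    ⟨⋃₀ c, ⟨sUnion_subset fun s hs => (hc hs).1,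
      (pairwiseDisjoint_sUnion hchain.directedOn).2 fun s hs => (hc hs).2⟩,
      fun _ => subset_sUnion_of_mem⟩
  obtain ⟨hMB, hMF⟩ := hM.prop
  refine ⟨M, hMB, fun hMc => hB ?_, hMF⟩
  have hcover : B ⊆ M ∪ ⋃ x ∈ ⋃ q ∈ M, (F q : Set X), {p ∈ B | x ∈ F p} := by
    intro p hp
    by_cases hpM : p ∈ M
    · exact Or.inl hpM
    have hins : ¬ (insert p M).PairwiseDisjoint F := fun h =>
      hpM (hM.mem_of_prop_insert ⟨insert_subset hp hMB, h⟩)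
    simp only [pairwiseDisjoint_insert, hMF, true_and, not_forall] at hins
    obtain ⟨q, hqM, -, hpq⟩ := hins
    obtain ⟨x, hxp, hxq⟩ := Finset.not_disjoint_iff.1 hpq
    exact Or.inr (mem_biUnion (mem_biUnion hqM hxq) ⟨hp, hxp⟩)
  exact (hMc.union ((hMc.biUnion fun q _ => (F q).countable_toSet).biUnion fun x _ => hF x)).mono
    hcover

variable [DecidableEq X]

theorem exists_not_countable_deltaSystem_of_card_le (F : α → Finset X) (n : ℕ) {B : Set α}
    (hB : ¬ B.Countable) (hn : ∀ p ∈ B, (F p).card ≤ n) :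
    ∃ C ⊆ B, ¬ C.Countable ∧ ∃ r, C.Pairwise fun p q => F p ∩ F q = r := by
  induction n generalizing F B with
  | zero =>
    refine ⟨B, subset_rfl, hB, ∅, fun p hp q _ _ => ?_⟩
    simp [Finset.card_eq_zero.1 (Nat.le_zero.1 (hn p hp))]
  | succ n ih =>
    by_cases hx : ∃ x, ¬ {p ∈ B | x ∈ F p}.Countable
    · obtain ⟨x, hx⟩ := hx
      obtain ⟨C, hCB, hC, r, hr⟩ := ih (fun p => (F p).erase x) hx fun p hp => by
        have := Finset.card_erase_of_mem hp.2
        have := hn p hp.1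
        omega
      refine ⟨C, fun p hp => (hCB hp).1, hC, insert x r, fun p hp q hq hpq => ?_⟩
      rw [← hr hp hq hpq]
      ext y
      by_cases hy : y = x <;> simp [hy, (hCB hp).2, (hCB hq).2]
    · push Not at hx
      obtain ⟨C, hCB, hC, hCF⟩ := exists_not_countable_pairwiseDisjoint F hB hx
      exact ⟨C, hCB, hC, ∅, fun p hp q hq hpq =>
        Finset.disjoint_iff_inter_eq_empty.1 (hCF hp hq hpq)⟩

theorem exists_not_countable_deltaSystem (F : α → Finset X) {A : Set α} (hA : ¬ A.Countable) :
    ∃ C ⊆ A, ¬ C.Countable ∧ ∃ r, C.Pairwise fun p q => F p ∩ F q = r := by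
  obtain ⟨n, hn⟩ := exists_not_countable_fiber hA (f := fun p => (F p).card) countable_univ
    (mapsTo_univ _ _)
  obtain ⟨C, hCA, hC, hr⟩ :=
    exists_not_countable_deltaSystem_of_card_le F n hn fun p hp => hp.2.le
  exact ⟨C, hCA.trans (sep_subset _ _), hC, hr⟩

end DeltaSystem

namespace BipGraph

variable {V W : Type*} {Γ : BipGraph V} {Γ' : BipGraph W}

theorem adj_comm (Γ : BipGraph V) {x y : V} : Γ.E x y ↔ Γ.E y x :=
  ⟨Γ.symm x y, Γ.symm y x⟩

theorem not_adj_of_mem_R {x y : V} (hx : x ∈ Γ.R) (hy : y ∈ Γ.R) : ¬ Γ.E x y := fun h => by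
  rcases Γ.bip x y h with ⟨hL, -⟩ | ⟨-, hL⟩
  exacts [disjoint_left.1 Γ.disj hL hx, disjoint_left.1 Γ.disj hL hy]

theorem IsSaS.countable_L {μ : Cardinal} (h : Γ.IsSaS Cardinal.aleph0 μ) : Γ.L.Countable :=
  Cardinal.le_aleph0_iff_set_countable.1 h.2.2.2.1.le

namespace IsPartialIso

variable {s t : Set V} {f g : V → W}

theorem congr (h : Γ.IsPartialIso Γ' s f) (hfg : EqOn f g s) : Γ.IsPartialIso Γ' s g := by
  obtain ⟨hs, hinj, hL, hR, hadj⟩ := h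
  refine ⟨hs, hinj.congr hfg, fun x hx => hfg hx ▸ hL x hx, fun x hx => hfg hx ▸ hR x hx,
    fun x hx y hy => ?_⟩
  rw [← hfg hx, ← hfg hy]
  exact hadj x hx y hy

theorem mem_R_of_apply_mem_R (h : Γ.IsPartialIso Γ' s f) {x : V} (hx : x ∈ s)
    (hfx : f x ∈ Γ'.R) : x ∈ Γ.R :=
  (h.1 hx).resolve_left fun hL => disjoint_left.1 Γ'.disj (h.2.2.1 x hx hL) hfx

theorem union (hs : Γ.IsPartialIso Γ' s f) (ht : Γ.IsPartialIso Γ' t f)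
    (hinj : ∀ x ∈ s, ∀ y ∈ t, f x = f y → x = y)
    (hadj : ∀ x ∈ s, ∀ y ∈ t, Γ.E x y ↔ Γ'.E (f x) (f y)) :
    Γ.IsPartialIso Γ' (s ∪ t) f := by
  obtain ⟨hsV, hsinj, hsL, hsR, hsadj⟩ := hs
  obtain ⟨htV, htinj, htL, htR, htadj⟩ := ht
  refine ⟨union_subset hsV htV, ?_, ?_, ?_, ?_⟩
  · rintro x (hx | hx) y (hy | hy) hxy
    exacts [hsinj hx hy hxy, hinj x hx y hy hxy, (hinj y hy x hx hxy.symm).symm,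
      htinj hx hy hxy]
  · rintro x (hx | hx)
    exacts [hsL x hx, htL x hx]
  · rintro x (hx | hx)
    exacts [hsR x hx, htR x hx]
  · rintro x (hx | hx) y (hy | hy)
    · exact hsadj x hx y hy
    · exact hadj x hx y hy
    · rw [Γ.adj_comm, Γ'.adj_comm]
      exact hadj y hy x hx
    · exact htadj x hx y hy

end IsPartialIso

end BipGraph

section Forcing

variable {V W I : Type*} {Γ : BipGraph V} {Γ' : BipGraph W} {idx : V → I} {idx' : W → I}
  {p q r : Finset V × (V → W)}

noncomputable def pieceSupport (Γ : BipGraph V) (idx : V → I) (p : Finset V × (V → W)) :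
    Finset I := by
  classical exact (p.1.filter (· ∈ Γ.R)).image idx

theorem mem_pieceSupport {a : V} (ha : a ∈ p.1) (haR : a ∈ Γ.R) :
    idx a ∈ pieceSupport Γ idx p := by
  simp only [pieceSupport, Finset.mem_image, Finset.mem_filter]
  exact ⟨a, ⟨ha, haR⟩, rfl⟩

def sharedPart (Γ : BipGraph V) (idx : V → I) (ρ : Finset I) : Set V :=
  Γ.L ∪ {a | a ∈ Γ.R ∧ idx a ∈ ρ}

theorem mem_sharedPart_of_idx_eq [DecidableEq I] {ρ : Finset I}
    (hρ : pieceSupport Γ idx p ∩ pieceSupport Γ idx q ⊆ ρ) {x y : V} (hx : x ∈ p.1)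
    (hy : y ∈ q.1) (hxR : x ∈ Γ.R) (hyR : y ∈ Γ.R) (hxy : idx x = idx y) :
    x ∈ sharedPart Γ idx ρ :=
  Or.inr ⟨hxR, hρ <|
    Finset.mem_inter.2 ⟨mem_pieceSupport hx hxR, hxy ▸ mem_pieceSupport hy hyR⟩⟩

def sharedGraph (Γ : BipGraph V) (idx : V → I) (ρ : Finset I) (p : Finset V × (V → W)) :
    Set (V × W) :=
  (↑p.1 ∩ sharedPart Γ idx ρ).graphOn p.2

theorem sharedGraph_finite (ρ : Finset I) (p : Finset V × (V → W)) :
    (sharedGraph Γ idx ρ p).Finite :=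
  (p.1.finite_toSet.inter_of_left _).image _

theorem mem_and_apply_eq_of_sharedGraph_eq {ρ : Finset I}
    (h : sharedGraph Γ idx ρ p = sharedGraph Γ idx ρ q) {a : V} (ha : a ∈ p.1)
    (haU : a ∈ sharedPart Γ idx ρ) : a ∈ q.1 ∧ q.2 a = p.2 a := by
  have : (a, p.2 a) ∈ sharedGraph Γ idx ρ q := h ▸ mem_graphOn.2 ⟨⟨ha, haU⟩, rfl⟩
  obtain ⟨⟨haq, -⟩, hqa⟩ := mem_graphOn.1 this
  exact ⟨haq, hqa⟩

def sharedPairs (Γ : BipGraph V) (Γ' : BipGraph W) (idx : V → I) (idx' : W → I)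
    (ρ : Finset I) : Set (V × W) :=
  Γ.L ×ˢ Γ'.L ∪ ⋃ i ∈ ρ, {a | a ∈ Γ.R ∧ idx a = i} ×ˢ {w | w ∈ Γ'.R ∧ idx' w = i}

theorem countable_sharedPairs (hL : Γ.L.Countable) (hL' : Γ'.L.Countable)
    (hpiece : ∀ i, {a | a ∈ Γ.R ∧ idx a = i}.Countable)
    (hpiece' : ∀ i, {w | w ∈ Γ'.R ∧ idx' w = i}.Countable) (ρ : Finset I) :
    (sharedPairs Γ Γ' idx idx' ρ).Countable :=
  (hL.prod hL').union (ρ.countable_toSet.biUnion fun i _ => (hpiece i).prod (hpiece' i))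

namespace PCond

theorem sharedGraph_subset (hp : PCond Γ Γ' idx idx' p) (ρ : Finset I) :
    sharedGraph Γ idx ρ p ⊆ sharedPairs Γ Γ' idx idx' ρ := by
  rintro _ ⟨a, ⟨ha, haL | ⟨haR, haρ⟩⟩, rfl⟩
  · exact Or.inl ⟨haL, hp.1.2.2.1 a ha haL⟩
  · exact Or.inr (mem_biUnion haρ ⟨⟨haR, rfl⟩, hp.1.2.2.2.1 a ha haR, hp.2 a ha haR⟩)

theorem mem_R_of_notMem_sharedPart (hp : PCond Γ Γ' idx idx' p) {ρ : Finset I} {x : V}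
    (hx : x ∈ p.1) (hxU : x ∉ sharedPart Γ idx ρ) : x ∈ Γ.R :=
  (hp.1.1 hx).resolve_left fun hxL => hxU (Or.inl hxL)

theorem of_pLe_union [DecidableEq V] (hp : PCond Γ Γ' idx idx' p) (hq : PCond Γ Γ' idx idx' q)
    (hpr : PLe p r) (hqr : PLe q r) (hr : r.1 = p.1 ∪ q.1)
    (hinj : ∀ x ∈ p.1, ∀ y ∈ q.1, p.2 x = q.2 y → x = y)
    (hadj : ∀ x ∈ p.1, ∀ y ∈ q.1, Γ.E x y ↔ Γ'.E (p.2 x) (q.2 y)) :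
    PCond Γ Γ' idx idx' r := by
  refine ⟨?_, fun a ha haR => ?_⟩
  · rw [hr, Finset.coe_union]
    refine (hp.1.congr fun x hx => (hpr.2 x hx).symm).union
      (hq.1.congr fun x hx => (hqr.2 x hx).symm) (fun x hx y hy hxy => hinj x hx y hy ?_)
      fun x hx y hy => ?_
    · rwa [hpr.2 x hx, hqr.2 y hy] at hxy
    · rw [hpr.2 x hx, hqr.2 y hy]
      exact hadj x hx y hy
  · rcases Finset.mem_union.1 (hr ▸ ha) with ha | ha
    · rw [hpr.2 a ha]
      exact hp.2 a ha haR
    · rw [hqr.2 a ha]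
      exact hq.2 a ha haR

variable {ρ : Finset I}

theorem adj_iff_of_sharedGraph_eq (hp : PCond Γ Γ' idx idx' p) (hq : PCond Γ Γ' idx idx' q)
    (hgraph : sharedGraph Γ idx ρ p = sharedGraph Γ idx ρ q)
    {x y : V} (hx : x ∈ p.1) (hy : y ∈ q.1) : Γ.E x y ↔ Γ'.E (p.2 x) (q.2 y) := by
  by_cases hxU : x ∈ sharedPart Γ idx ρ
  · obtain ⟨hxq, hqx⟩ := mem_and_apply_eq_of_sharedGraph_eq hgraph hx hxU
    rw [← hqx]
    exact hq.1.2.2.2.2 x hxq y hy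
  by_cases hyU : y ∈ sharedPart Γ idx ρ
  · obtain ⟨hyp, hpy⟩ := mem_and_apply_eq_of_sharedGraph_eq hgraph.symm hy hyU
    rw [← hpy]
    exact hp.1.2.2.2.2 x hx y hyp
  have hxR := hp.mem_R_of_notMem_sharedPart hx hxU
  have hyR := hq.mem_R_of_notMem_sharedPart hy hyU
  exact iff_of_false (BipGraph.not_adj_of_mem_R hxR hyR)
    (BipGraph.not_adj_of_mem_R (hp.1.2.2.2.1 x hx hxR) (hq.1.2.2.2.1 y hy hyR))

variable [DecidableEq I]

theorem apply_eq_of_sharedGraph_eq (hp : PCond Γ Γ' idx idx' p)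
    (hρ : pieceSupport Γ idx p ∩ pieceSupport Γ idx q ⊆ ρ)
    (hgraph : sharedGraph Γ idx ρ p = sharedGraph Γ idx ρ q)
    {x : V} (hxp : x ∈ p.1) (hxq : x ∈ q.1) : q.2 x = p.2 x := by
  by_cases hxU : x ∈ sharedPart Γ idx ρ
  · exact (mem_and_apply_eq_of_sharedGraph_eq hgraph hxp hxU).2
  have hxR := hp.mem_R_of_notMem_sharedPart hxp hxU
  exact absurd (mem_sharedPart_of_idx_eq hρ hxp hxq hxR hxR rfl) hxU

theorem eq_of_apply_eq_of_sharedGraph_eq (hp : PCond Γ Γ' idx idx' p)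
    (hq : PCond Γ Γ' idx idx' q)
    (hρ : pieceSupport Γ idx p ∩ pieceSupport Γ idx q ⊆ ρ)
    (hgraph : sharedGraph Γ idx ρ p = sharedGraph Γ idx ρ q)
    {x y : V} (hx : x ∈ p.1) (hy : y ∈ q.1) (hxy : p.2 x = q.2 y) : x = y := by
  by_cases hxU : x ∈ sharedPart Γ idx ρ
  · obtain ⟨hxq, hqx⟩ := mem_and_apply_eq_of_sharedGraph_eq hgraph hx hxU
    exact hq.1.2.1 hxq hy (hqx.trans hxy)
  -- Otherwise `x` and `y` are right vertices whose images share a piece, so they share one too.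
  have hxR := hp.mem_R_of_notMem_sharedPart hx hxU
  have hyR : y ∈ Γ.R := hq.1.mem_R_of_apply_mem_R hy (hxy ▸ hp.1.2.2.2.1 x hx hxR)
  exact absurd (mem_sharedPart_of_idx_eq hρ hx hy hxR hyR
    (by rw [← hp.2 x hx hxR, ← hq.2 y hy hyR, hxy])) hxU

theorem compatible_of_sharedGraph_eq (hp : PCond Γ Γ' idx idx' p)
    (hq : PCond Γ Γ' idx idx' q)
    (hρ : pieceSupport Γ idx p ∩ pieceSupport Γ idx q ⊆ ρ)
    (hgraph : sharedGraph Γ idx ρ p = sharedGraph Γ idx ρ q) :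
    ∃ r, PCond Γ Γ' idx idx' r ∧ PLe p r ∧ PLe q r := by
  classical
  let r : Finset V × (V → W) := (p.1 ∪ q.1, (↑p.1 : Set V).piecewise p.2 q.2)
  have hpr : PLe p r := ⟨Finset.subset_union_left, fun x hx => piecewise_eq_of_mem _ _ _ hx⟩
  have hqr : PLe q r := by
    refine ⟨Finset.subset_union_right, fun x hx => ?_⟩
    by_cases hxp : x ∈ p.1
    · rw [hpr.2 x hxp, hp.apply_eq_of_sharedGraph_eq hρ hgraph hxp hx]
    · exact piecewise_eq_of_notMem _ _ _ hxp
  exact ⟨r, hp.of_pLe_union hq hpr hqr rfl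
    (fun x hx y hy => hp.eq_of_apply_eq_of_sharedGraph_eq hq hρ hgraph hx hy)
    (fun x hx y hy => hp.adj_iff_of_sharedGraph_eq hq hgraph hx hy), hpr, hqr⟩

end PCond

end Forcing

universe u

theorem forcing_is_ccc_general {V W I : Type u} (κ : Cardinal)
    (Γ : BipGraph V) (Γ' : BipGraph W)
    (hΓ : Γ.IsSaS Cardinal.aleph0 κ) (hΓ' : Γ'.IsSaS Cardinal.aleph0 κ)
    (idx : V → I) (idx' : W → I)
    (hpiece : ∀ i : I, {a | a ∈ Γ.R ∧ idx a = i}.Countable ∧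
      Γ.RandOn {a | a ∈ Γ.R ∧ idx a = i})
    (hpiece' : ∀ i : I, {a | a ∈ Γ'.R ∧ idx' a = i}.Countable ∧
      Γ'.RandOn {a | a ∈ Γ'.R ∧ idx' a = i}) :
    ∀ A : Set (Finset V × (V → W)),
      (∀ p ∈ A, PCond Γ Γ' idx idx' p) →
      (∀ p ∈ A, ∀ q ∈ A, p ≠ q →
        ¬ ∃ r, PCond Γ Γ' idx idx' r ∧ PLe p r ∧ PLe q r) →
      A.Countable := by
  classical
  intro A hcond hanti
  by_contra hA
  obtain ⟨B, hBA, hB, ρ, hρ⟩ := exists_not_countable_deltaSystem (pieceSupport Γ idx) hA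
  have hpairs := countable_sharedPairs hΓ.countable_L hΓ'.countable_L (fun i => (hpiece i).1)
    (fun i => (hpiece' i).1) ρ
  obtain ⟨g, hg⟩ := exists_not_countable_fiber hB
    (f := sharedGraph Γ idx ρ) (countable_ofPred_finite_subset hpairs)
    fun p hp => ⟨sharedGraph_finite ρ p, (hcond p (hBA hp)).sharedGraph_subset ρ⟩
  obtain ⟨p, ⟨hp, hpg⟩, q, ⟨hq, hqg⟩, hpq⟩ :=
    not_subsingleton_iff.1 fun h => hg h.countable
  exact hanti p (hBA hp) q (hBA hq) hpq ((hcond p (hBA hp)).compatible_of_sharedGraph_eq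
    (hcond q (hBA hq)) (hρ hp hq hpq).le (hpg.trans hqg.symm))

theorem forcing_is_ccc {V W I : Type u} (κ : Cardinal)
    (hκ : Cardinal.aleph0 < κ) (hI : Cardinal.mk I = κ)
    (Γ : BipGraph V) (Γ' : BipGraph W)
    (hΓ : Γ.IsSaS Cardinal.aleph0 κ) (hΓ' : Γ'.IsSaS Cardinal.aleph0 κ)
    (idx : V → I) (idx' : W → I)
    (hpiece : ∀ i : I, {a | a ∈ Γ.R ∧ idx a = i}.Countable ∧
      Γ.RandOn {a | a ∈ Γ.R ∧ idx a = i})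
    (hpiece' : ∀ i : I, {a | a ∈ Γ'.R ∧ idx' a = i}.Countable ∧
      Γ'.RandOn {a | a ∈ Γ'.R ∧ idx' a = i}) :
    ∀ A : Set (Finset V × (V → W)),
      (∀ p ∈ A, PCond Γ Γ' idx idx' p) →
      (∀ p ∈ A, ∀ q ∈ A, p ≠ q →
        ¬ ∃ r, PCond Γ Γ' idx idx' r ∧ PLe p r ∧ PLe q r) →
      A.Countable :=
  forcing_is_ccc_general κ Γ Γ' hΓ hΓ' idx idx' hpiece hpiece'
end
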